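/- arXiv:1602.08894 — 7 statements merged into one kernel-verified Lean document; each statement's English description precedes it below -/
import Mathlib

section
/- Let d ≥ 2, let S ⊆ [0,1]^d be a nonempty compact set, let Q* be a d-quasi-copula, and let Q be any d-quasi-copula satisfying Q(x) = Q*(x) for all x ∈ S. Then Q_low^{S,Q*}(u) ≤ Q(u) ≤ Q_up^{S,Q*}(u) for all u ∈ [0,1]^d. -/
open scoped BigOperators NNReal ENNReal

noncomputable section

/-- Membership in the unit cube `[0,1]^ι`. -/
def InCube {ι : Type*} (u : ι → ℝ) : Prop := ∀ i, 0 ≤ u i ∧ u i ≤ 1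

/-- A (quasi-)copula on the index set `ι`: it maps the unit cube to `[0,1]`,
satisfies the boundary conditions (QC1), is increasing in each argument (QC2)
and is `1`-Lipschitz for the `l¹`-norm (QC3). -/
structure IsQuasiCopula (ι : Type*) [Fintype ι] (Q : (ι → ℝ) → ℝ) : Prop where
  nonneg : ∀ u : ι → ℝ, InCube u → 0 ≤ Q u
  le_one : ∀ u : ι → ℝ, InCube u → Q u ≤ 1
  zero_boundary : ∀ u : ι → ℝ, InCube u → (∃ i, u i = 0) → Q u = 0
  one_boundary : ∀ u : ι → ℝ, InCube u → ∀ i : ι, (∀ j, j ≠ i → u j = 1) → Q u = u i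
  mono : ∀ u v : ι → ℝ, InCube u → InCube v → (∀ i, u i ≤ v i) → Q u ≤ Q v
  lipschitz : ∀ u v : ι → ℝ, InCube u → InCube v → |Q u - Q v| ≤ ∑ i, |u i - v i|

/-- The `Q`-volume of the box `(a, b]`: the signed sum over the vertices of the box,
a vertex getting the sign `(-1)^{#{i : c i = a i}}`. -/
def boxVolume {ι : Type*} [Fintype ι] [DecidableEq ι] (Q : (ι → ℝ) → ℝ)
    (a b : ι → ℝ) : ℝ :=
  ∑ J : Finset ι, (-1 : ℝ) ^ J.card * Q (fun i => if i ∈ J then a i else b i)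

/-- `d`-increasingness: every box contained in the unit cube has nonnegative volume. -/
def DIncreasing {ι : Type*} [Fintype ι] [DecidableEq ι] (Q : (ι → ℝ) → ℝ) : Prop :=
  ∀ a b : ι → ℝ, InCube a → InCube b → (∀ i, a i ≤ b i) → 0 ≤ boxVolume Q a b

/-- A copula is a quasi-copula which is `d`-increasing. -/
def IsCopula (ι : Type*) [Fintype ι] [DecidableEq ι] (Q : (ι → ℝ) → ℝ) : Prop :=
  IsQuasiCopula ι Q ∧ DIncreasing Q

/-- The lower Fréchet–Hoeffding bound `W_d(u) = max(0, Σ u_i - d + 1)`. -/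
def Wd {ι : Type*} [Fintype ι] (u : ι → ℝ) : ℝ :=
  max 0 ((∑ i, u i) - (Fintype.card ι : ℝ) + 1)

/-- The upper Fréchet–Hoeffding bound `M_d(u) = min(u_1, …, u_d)`. -/
def Md {ι : Type*} (u : ι → ℝ) : ℝ := sInf (Set.range u)

/-- The improved lower Fréchet–Hoeffding bound for the prescription `Q = Q*` on `S`:
`max(0, Σ u_i - d + 1, max_{x ∈ S} (Q*(x) - Σ (x_i - u_i)^+))`. -/
def QLowS {ι : Type*} [Fintype ι] (S : Set (ι → ℝ)) (Q : (ι → ℝ) → ℝ)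
    (u : ι → ℝ) : ℝ :=
  max (Wd u) (sSup ((fun x => Q x - ∑ i, max (x i - u i) 0) '' S))

/-- The improved upper Fréchet–Hoeffding bound for the prescription `Q = Q*` on `S`:
`min(u_1, …, u_d, min_{x ∈ S} (Q*(x) + Σ (u_i - x_i)^+))`. -/
def QUpS {ι : Type*} [Fintype ι] (S : Set (ι → ℝ)) (Q : (ι → ℝ) → ℝ)
    (u : ι → ℝ) : ℝ :=
  min (Md u) (sInf ((fun x => Q x + ∑ i, max (u i - x i) 0) '' S))

/-- The single-point improved lower bound `Q_low^{x,r}`. -/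
def QLowPt {ι : Type*} [Fintype ι] (x : ι → ℝ) (r : ℝ) (v : ι → ℝ) : ℝ :=
  max (Wd v) (r - ∑ i, max (x i - v i) 0)

/-- The single-point improved upper bound `Q_up^{x,r}`. -/
def QUpPt {ι : Type*} [Fintype ι] (x : ι → ℝ) (r : ℝ) (v : ι → ℝ) : ℝ :=
  min (Md v) (r + ∑ i, max (v i - x i) 0)

/-- The `J`-margin of `Q`: evaluate `Q` at the lift of `v`, i.e. the vector which
carries the coordinates of `v` on `J` and equals `1` elsewhere. -/
def marginQ {ι : Type*} [Fintype ι] [DecidableEq ι] (Q : (ι → ℝ) → ℝ)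
    (J : Finset ι) (v : ↥J → ℝ) : ℝ :=
  Q fun i => if h : i ∈ J then v ⟨i, h⟩ else 1

/-- The survival function of `Q`:
`Q̂(u) = V_Q((u,1]) = Σ_{J ⊆ ι} (-1)^{|J|} Q(u^J)` where `u^J` agrees with `u` on `J`
and equals `1` elsewhere. -/
def survivalF {ι : Type*} [Fintype ι] [DecidableEq ι] (Q : (ι → ℝ) → ℝ)
    (u : ι → ℝ) : ℝ :=
  ∑ J : Finset ι, (-1 : ℝ) ^ J.card * Q (fun i => if i ∈ J then u i else 1)


/-- Key Lipschitz/monotonicity estimate: `Q x ≤ Q u + Σ (x i - u i)^+`. -/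
lemma lip_bound {ι : Type*} [Fintype ι] (Q : (ι → ℝ) → ℝ) (hQ : IsQuasiCopula ι Q)
    (x u : ι → ℝ) (hx : InCube x) (hu : InCube u) :
    Q x ≤ Q u + ∑ i, max (x i - u i) 0 := by
  set v : ι → ℝ := fun i => max (x i) (u i) with hv
  have hvc : InCube v := fun i => ⟨le_max_of_le_left (hx i).1, max_le (hx i).2 (hu i).2⟩
  have h1 : Q x ≤ Q v := hQ.mono x v hx hvc (fun i => le_max_left _ _)
  have h2 : |Q v - Q u| ≤ ∑ i, |v i - u i| := hQ.lipschitz v u hvc hu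
  have h3 : ∀ i, |v i - u i| = max (x i - u i) 0 := by
    intro i
    have : u i ≤ v i := le_max_right _ _
    rw [abs_of_nonneg (by linarith)]
    show x i ⊔ u i - u i = _
    rcases le_total (x i) (u i) with h | h
    · rw [max_eq_right h, max_eq_right (by linarith : x i - u i ≤ 0), sub_self]
    · rw [max_eq_left h, max_eq_left (by linarith : (0:ℝ) ≤ x i - u i)]
  have h4 : Q v - Q u ≤ ∑ i, max (x i - u i) 0 := by
    calc Q v - Q u ≤ |Q v - Q u| := le_abs_self _
    _ ≤ ∑ i, |v i - u i| := h2
    _ = ∑ i, max (x i - u i) 0 := Finset.sum_congr rfl (fun i _ => h3 i)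
  linarith

/-- improved Fréchet–Hoeffding bounds under prescription on a compact set. -/
theorem stmt1 (d : ℕ) (hd : 2 ≤ d) (S : Set (Fin d → ℝ)) (hne : S.Nonempty)
    (hcomp : IsCompact S) (hsub : ∀ x ∈ S, InCube x)
    (Qstar : (Fin d → ℝ) → ℝ) (hQstar : IsQuasiCopula (Fin d) Qstar)
    (Q : (Fin d → ℝ) → ℝ) (hQ : IsQuasiCopula (Fin d) Q)
    (hagree : ∀ x ∈ S, Q x = Qstar x)
    (u : Fin d → ℝ) (hu : InCube u) :
    QLowS S Qstar u ≤ Q u ∧ Q u ≤ QUpS S Qstar u := by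
  have hdpos : 0 < d := by omega
  have hne' : Nonempty (Fin d) := ⟨⟨0, hdpos⟩⟩
  have hQu0 : 0 ≤ Q u := hQ.nonneg u hu
  constructor
  · -- lower bound
    rw [QLowS]
    apply max_le
    · -- Wd u ≤ Q u
      apply max_le hQu0
      -- via Lipschitz from the all-ones point
      have hone : InCube (fun _ : Fin d => (1:ℝ)) := fun i => ⟨zero_le_one, le_refl 1⟩
      have hQ1 : Q (fun _ => 1) = 1 :=
        hQ.one_boundary _ hone ⟨0, hdpos⟩ (fun j _ => rfl)
      have hlip := hQ.lipschitz (fun _ => 1) u hone hu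
      have habs : ∀ i, |(1:ℝ) - u i| = 1 - u i := fun i => abs_of_nonneg (by linarith [(hu i).2])
      have hsum : ∑ i : Fin d, |(1:ℝ) - u i| = (d:ℝ) - ∑ i, u i := by
        rw [Finset.sum_congr rfl (fun i _ => habs i), Finset.sum_sub_distrib]
        simp
      rw [hQ1, hsum] at hlip
      have := abs_le.mp hlip
      simp only [Fintype.card_fin]
      linarith [this.1]
    · -- sSup bound
      apply Real.sSup_le _ hQu0
      rintro y ⟨x, hxS, rfl⟩
      have := lip_bound Q hQ x u (hsub x hxS) hu
      dsimp only
      rw [← hagree x hxS]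
      linarith
  · -- upper bound
    rw [QUpS]
    apply le_min
    · -- Q u ≤ Md u
      rw [Md]
      apply le_csInf (Set.range_nonempty u)
      rintro b ⟨i, rfl⟩
      set w : Fin d → ℝ := fun j => if j = i then u i else 1 with hw
      have hwc : InCube w := by
        intro j
        by_cases h : j = i <;> simp [hw, h, (hu i).1, (hu i).2]
      have h1 : Q u ≤ Q w := by
        apply hQ.mono u w hu hwc
        intro j
        by_cases h : j = i <;> simp [hw, h, (hu j).2]
      have h2 : Q w = u i := by
        have := hQ.one_boundary w hwc i (fun j hj => by simp [hw, hj])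
        simpa [hw] using this
      linarith
    · -- sInf bound
      apply le_csInf (hne.image _)
      rintro b ⟨x, hxS, rfl⟩
      have := lip_bound Q hQ u x hu (hsub x hxS)
      dsimp only
      rw [← hagree x hxS]
      linarith
end
end

section
/- Let d ≥ 2, let S ⊆ [0,1]^d be a nonempty compact set and let Q* be a d-quasi-copula. Then for every u ∈ S one has Q_low^{S,Q*}(u) = Q*(u) = Q_up^{S,Q*}(u). -/
open scoped BigOperators NNReal ENNReal

noncomputable section

lemma qc_diff_le {d : ℕ} (Q : (Fin d → ℝ) → ℝ) (hQ : IsQuasiCopula (Fin d) Q)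
    (x u : Fin d → ℝ) (hx : InCube x) (hu : InCube u) :
    Q x - ∑ i, max (x i - u i) 0 ≤ Q u := by
  set m : Fin d → ℝ := fun i => min (x i) (u i) with hm
  have hmc : InCube m := fun i => ⟨le_min (hx i).1 (hu i).1, min_le_of_left_le (hx i).2⟩
  have h1 : Q x - Q m ≤ ∑ i, max (x i - u i) 0 := by
    have hlip := hQ.lipschitz x m hx hmc
    have heq : ∑ i, |x i - m i| = ∑ i, max (x i - u i) 0 := by
      apply Finset.sum_congr rfl
      intro i _
      simp only [hm]
      rcases le_total (x i) (u i) with h | h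
      · rw [min_eq_left h, sub_self, abs_zero, max_eq_right (sub_nonpos.mpr h)]
      · rw [min_eq_right h, abs_of_nonneg (by linarith), max_eq_left (by linarith)]
    calc Q x - Q m ≤ |Q x - Q m| := le_abs_self _
      _ ≤ _ := hlip
      _ = _ := heq
  have h2 : Q m ≤ Q u := hQ.mono m u hmc hu (fun i => min_le_right _ _)
  linarith

lemma qc_le_add {d : ℕ} (Q : (Fin d → ℝ) → ℝ) (hQ : IsQuasiCopula (Fin d) Q)
    (x u : Fin d → ℝ) (hx : InCube x) (hu : InCube u) :
    Q u ≤ Q x + ∑ i, max (u i - x i) 0 := by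
  set M : Fin d → ℝ := fun i => max (x i) (u i) with hM
  have hMc : InCube M := fun i => ⟨le_max_of_le_left (hx i).1, max_le (hx i).2 (hu i).2⟩
  have h1 : Q M - Q x ≤ ∑ i, max (u i - x i) 0 := by
    have hlip := hQ.lipschitz M x hMc hx
    have heq : ∑ i, |M i - x i| = ∑ i, max (u i - x i) 0 := by
      apply Finset.sum_congr rfl
      intro i _
      simp only [hM]
      rcases le_total (u i) (x i) with h | h
      · rw [max_eq_left h, sub_self, abs_zero, max_eq_right (sub_nonpos.mpr h)]
      · rw [max_eq_right h, abs_of_nonneg (by linarith), max_eq_left (by linarith)]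
    calc Q M - Q x ≤ |Q M - Q x| := le_abs_self _
      _ ≤ _ := hlip
      _ = _ := heq
  have h2 : Q u ≤ Q M := hQ.mono u M hu hMc (fun i => le_max_right _ _)
  linarith

lemma qc_wd_le {d : ℕ} (hd : 0 < d) (Q : (Fin d → ℝ) → ℝ) (hQ : IsQuasiCopula (Fin d) Q)
    (u : Fin d → ℝ) (hu : InCube u) : Wd u ≤ Q u := by
  have h1 : InCube (fun _ : Fin d => (1 : ℝ)) := fun i => ⟨zero_le_one, le_rfl⟩
  have hQ1 : Q (fun _ => 1) = 1 :=
    hQ.one_boundary _ h1 ⟨0, hd⟩ (fun j _ => rfl)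
  have hlip := hQ.lipschitz (fun _ => 1) u h1 hu
  have heq : ∑ i : Fin d, |(1:ℝ) - u i| = ∑ i : Fin d, (1 - u i) := by
    apply Finset.sum_congr rfl
    intro i _
    exact abs_of_nonneg (by linarith [(hu i).2])
  have hsum : ∑ i : Fin d, ((1:ℝ) - u i) = (d : ℝ) - ∑ i, u i := by
    rw [Finset.sum_sub_distrib]
    simp
  have h3 : Q (fun _ => 1) - Q u ≤ (d : ℝ) - ∑ i, u i := by
    calc Q (fun _ => 1) - Q u ≤ |Q (fun _ => 1) - Q u| := le_abs_self _
      _ ≤ _ := hlip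
      _ = _ := heq
      _ = _ := hsum
  have h4 : (∑ i, u i) - (d : ℝ) + 1 ≤ Q u := by rw [hQ1] at h3; linarith
  have h5 : 0 ≤ Q u := hQ.nonneg u hu
  unfold Wd
  simp only [Fintype.card_fin]
  exact max_le h5 h4

lemma qc_le_md {d : ℕ} (hd : 0 < d) (Q : (Fin d → ℝ) → ℝ) (hQ : IsQuasiCopula (Fin d) Q)
    (u : Fin d → ℝ) (hu : InCube u) : Q u ≤ Md u := by
  unfold Md
  apply le_csInf ⟨u ⟨0, hd⟩, Set.mem_range_self _⟩
  rintro _ ⟨i, rfl⟩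
  set v : Fin d → ℝ := Function.update (fun _ : Fin d => (1:ℝ)) i (u i) with hv
  have hvc : InCube v := by
    intro j
    by_cases h : j = i
    · subst h; simp [hv, hu j]
    · simp [hv, Function.update_of_ne h]
  have hvu : ∀ j, u j ≤ v j := by
    intro j
    by_cases h : j = i
    · subst h; simp [hv]
    · simp [hv, Function.update_of_ne h, (hu j).2]
  have hmono := hQ.mono u v hu hvc hvu
  have hb : Q v = u i := by
    have := hQ.one_boundary v hvc i (fun j hj => by simp [hv, Function.update_of_ne hj])
    simpa [hv] using this
  linarith

/-- the improved Fréchet–Hoeffding bounds coincide with `Q*` on `S`. -/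
theorem stmt2 (d : ℕ) (hd : 2 ≤ d) (S : Set (Fin d → ℝ)) (hne : S.Nonempty)
    (hcomp : IsCompact S) (hsub : ∀ x ∈ S, InCube x)
    (Qstar : (Fin d → ℝ) → ℝ) (hQstar : IsQuasiCopula (Fin d) Qstar) :
    ∀ u ∈ S, QLowS S Qstar u = Qstar u ∧ QUpS S Qstar u = Qstar u := by
  intro u huS
  have hu := hsub u huS
  have hW : Wd u ≤ Qstar u := qc_wd_le (by omega) Qstar hQstar u hu
  have hM : Qstar u ≤ Md u := qc_le_md (by omega) Qstar hQstar u hu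
  have hfu : Qstar u - ∑ i, max (u i - u i) 0 = Qstar u := by simp
  have hgu : Qstar u + ∑ i, max (u i - u i) 0 = Qstar u := by simp
  constructor
  · unfold QLowS
    have hsup : sSup ((fun x => Qstar x - ∑ i, max (x i - u i) 0) '' S) = Qstar u := by
      apply le_antisymm
      · apply csSup_le ⟨_, Set.mem_image_of_mem _ huS⟩
        rintro _ ⟨x, hxS, rfl⟩
        exact qc_diff_le Qstar hQstar x u (hsub x hxS) hu
      · apply le_csSup
        · refine ⟨Qstar u, ?_⟩
          rintro _ ⟨x, hxS, rfl⟩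
          exact qc_diff_le Qstar hQstar x u (hsub x hxS) hu
        · exact ⟨u, huS, hfu⟩
    rw [hsup]
    exact max_eq_right hW
  · unfold QUpS
    have hinf : sInf ((fun x => Qstar x + ∑ i, max (u i - x i) 0) '' S) = Qstar u := by
      apply le_antisymm
      · apply csInf_le
        · refine ⟨Qstar u, ?_⟩
          rintro _ ⟨x, hxS, rfl⟩
          exact qc_le_add Qstar hQstar x u (hsub x hxS) hu
        · exact ⟨u, huS, hgu⟩
      · apply le_csInf ⟨_, Set.mem_image_of_mem _ huS⟩
        rintro _ ⟨x, hxS, rfl⟩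
        exact qc_le_add Qstar hQstar x u (hsub x hxS) hu
    rw [hinf]
    exact min_eq_right hM
end
end

section
/- Let d ≥ 2, let S ⊆ [0,1]^d be a nonempty compact set and let Q* be a d-quasi-copula. Then the improved lower Fréchet–Hoeffding bound Q_low^{S,Q*} : [0,1]^d → [0,1] is itself a d-quasi-copula, i.e. it satisfies the boundary conditions (QC1), is increasing in each argument (QC2), and is 1-Lipschitz for the l1-norm (QC3). -/
open scoped BigOperators NNReal ENNReal

noncomputable section

lemma qc_le_coord {ι : Type*} [Fintype ι] [DecidableEq ι] {Q : (ι → ℝ) → ℝ}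
    (hQ : IsQuasiCopula ι Q) {x : ι → ℝ} (hx : InCube x) (i : ι) : Q x ≤ x i := by
  set w : ι → ℝ := fun j => if j = i then x i else 1 with hw
  have hwcube : InCube w := by
    intro j
    by_cases h : j = i <;> simp [hw, h, (hx i).1, (hx i).2]
  have h1 : Q w = w i := hQ.one_boundary w hwcube i (fun j hj => by simp [hw, hj])
  have h2 : Q x ≤ Q w := hQ.mono x w hx hwcube (fun j => by
    by_cases h : j = i <;> simp [hw, h, (hx j).2])
  have : w i = x i := by simp [hw]
  rw [h1, this] at h2
  exact h2

lemma Wd_nonneg {ι : Type*} [Fintype ι] (u : ι → ℝ) : 0 ≤ Wd u := le_max_left _ _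

lemma QLowS_nonneg' {ι : Type*} [Fintype ι] (S : Set (ι → ℝ)) (Q : (ι → ℝ) → ℝ)
    (u : ι → ℝ) : 0 ≤ QLowS S Q u := le_trans (Wd_nonneg u) (le_max_left _ _)

/-- the improved lower Fréchet–Hoeffding bound is a quasi-copula. -/
theorem stmt3 (d : ℕ) (hd : 2 ≤ d) (S : Set (Fin d → ℝ)) (hne : S.Nonempty)
    (hcomp : IsCompact S) (hsub : ∀ x ∈ S, InCube x)
    (Qstar : (Fin d → ℝ) → ℝ) (hQstar : IsQuasiCopula (Fin d) Qstar) :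
    IsQuasiCopula (Fin d) (QLowS S Qstar) := by
  set g : (Fin d → ℝ) → (Fin d → ℝ) → ℝ :=
    fun u x => Qstar x - ∑ i, max (x i - u i) 0 with hg
  have hgdef : ∀ u, QLowS S Qstar u = max (Wd u) (sSup (g u '' S)) := fun u => rfl
  have hsum_nonneg : ∀ (u x : Fin d → ℝ), 0 ≤ ∑ i, max (x i - u i) 0 :=
    fun u x => Finset.sum_nonneg fun i _ => le_max_right _ _
  -- every element of the image is at most 1
  have himle : ∀ u : Fin d → ℝ, ∀ y ∈ g u '' S, y ≤ 1 := by
    rintro u y ⟨x, hxS, rfl⟩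
    have h1 : Qstar x ≤ 1 := hQstar.le_one x (hsub x hxS)
    have := hsum_nonneg u x
    simp only [hg]
    linarith
  have hbdd : ∀ u : Fin d → ℝ, BddAbove (g u '' S) :=
    fun u => ⟨1, fun y hy => himle u y hy⟩
  -- monotonicity of g in u
  have hgmono : ∀ u v : Fin d → ℝ, (∀ i, u i ≤ v i) → ∀ x, g u x ≤ g v x := by
    intro u v huv x
    simp only [hg]
    have : ∀ i ∈ Finset.univ, max (x i - v i) 0 ≤ max (x i - u i) 0 :=
      fun i _ => max_le_max (by linarith [huv i]) le_rfl
    have := Finset.sum_le_sum this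
    linarith
  -- key one-sided Lipschitz estimate
  have key : ∀ u v : Fin d → ℝ,
      QLowS S Qstar u ≤ QLowS S Qstar v + ∑ i, |u i - v i| := by
    intro u v
    have habs_nonneg : (0:ℝ) ≤ ∑ i, |u i - v i| :=
      Finset.sum_nonneg fun i _ => abs_nonneg _
    have h0 : (0:ℝ) ≤ QLowS S Qstar v + ∑ i, |u i - v i| :=
      add_nonneg (QLowS_nonneg' S Qstar v) habs_nonneg
    rw [hgdef u]
    apply max_le
    · -- Wd part
      apply max_le h0
      have h1 : ∑ i, u i ≤ ∑ i, v i + ∑ i, |u i - v i| := by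
        rw [← Finset.sum_add_distrib]
        exact Finset.sum_le_sum fun i _ => by
          have := le_abs_self (u i - v i); linarith
      have h2 : (∑ i, v i) - (Fintype.card (Fin d) : ℝ) + 1 ≤ Wd v := le_max_right _ _
      have h3 : Wd v ≤ QLowS S Qstar v := le_max_left _ _
      linarith
    · -- sSup part
      apply Real.sSup_le _ h0
      rintro y ⟨x, hxS, rfl⟩
      have hterm : ∀ i ∈ Finset.univ,
          max (x i - u i) 0 ≥ max (x i - v i) 0 - |u i - v i| := by
        intro i _
        have h1 : x i - v i ≤ max (x i - u i) 0 + |u i - v i| := by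
          have := le_abs_self (u i - v i)
          have := le_max_left (x i - u i) 0
          linarith
        have h2 : (0:ℝ) ≤ max (x i - u i) 0 + |u i - v i| :=
          add_nonneg (le_max_right _ _) (abs_nonneg _)
        have := max_le h1 h2
        linarith
    -- from termwise: ∑ max(x-v)⁺ ≤ ∑ max(x-u)⁺ + ∑|u-v|
      have hsum : ∑ i, max (x i - v i) 0 ≤
          (∑ i, max (x i - u i) 0) + ∑ i, |u i - v i| := by
        have := Finset.sum_le_sum hterm
        rw [Finset.sum_sub_distrib] at this
        linarith
      have hmem : g v x ∈ g v '' S := Set.mem_image_of_mem _ hxS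
      have hle : g v x ≤ sSup (g v '' S) := le_csSup (hbdd v) hmem
      have h3 : sSup (g v '' S) ≤ QLowS S Qstar v := le_max_right _ _
      simp only [hg] at hle ⊢
      linarith
  refine ⟨?_, ?_, ?_, ?_, ?_, ?_⟩
  · exact fun u _ => QLowS_nonneg' S Qstar u
  · -- le_one
    intro u hu
    rw [hgdef u]
    apply max_le
    · apply max_le zero_le_one
      have h1 : ∑ i, u i ≤ (Fintype.card (Fin d) : ℝ) := by
        calc ∑ i, u i ≤ ∑ _i : Fin d, (1:ℝ) :=
              Finset.sum_le_sum fun i _ => (hu i).2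
          _ = (Fintype.card (Fin d) : ℝ) := by simp
      linarith
    · exact Real.sSup_le (himle u) zero_le_one
  · -- zero boundary
    rintro u hu ⟨i, hi⟩
    refine le_antisymm ?_ (QLowS_nonneg' S Qstar u)
    rw [hgdef u]
    apply max_le
    · apply max_le le_rfl
      have h1 : ∑ j, u j ≤ (Fintype.card (Fin d) : ℝ) - 1 := by
        rw [← Finset.add_sum_erase Finset.univ u (Finset.mem_univ i), hi, zero_add]
        calc ∑ j ∈ Finset.univ.erase i, u j
            ≤ ∑ _j ∈ Finset.univ.erase i, (1:ℝ) :=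
              Finset.sum_le_sum fun j _ => (hu j).2
          _ = (Fintype.card (Fin d) : ℝ) - 1 := by
              rw [Finset.sum_const, Finset.card_erase_of_mem (Finset.mem_univ i),
                nsmul_eq_mul, mul_one, Finset.card_univ]
              have hcard : 1 ≤ Fintype.card (Fin d) := by
                rw [Fintype.card_fin]; omega
              rw [Nat.cast_sub hcard, Nat.cast_one]
      linarith
    · apply Real.sSup_le _ le_rfl
      rintro y ⟨x, hxS, rfl⟩
      have hx := hsub x hxS
      have h1 : Qstar x ≤ x i := qc_le_coord hQstar hx i
      have h2 : max (x i - u i) 0 = x i := by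
        rw [hi, sub_zero, max_eq_left (hx i).1]
      have h3 : max (x i - u i) 0 ≤ ∑ j, max (x j - u j) 0 :=
        Finset.single_le_sum (f := fun j => max (x j - u j) 0) (fun j _ => le_max_right _ _) (Finset.mem_univ i)
      simp only [hg]
      linarith
  · -- one boundary
    intro u hu i hji
    have hsum : ∑ j, u j = u i + ((Fintype.card (Fin d) : ℝ) - 1) := by
      rw [← Finset.add_sum_erase Finset.univ u (Finset.mem_univ i)]
      congr 1
      have : ∀ j ∈ Finset.univ.erase i, u j = 1 := fun j hj =>
        hji j (Finset.mem_erase.mp hj).1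
      rw [Finset.sum_congr rfl this, Finset.sum_const, Finset.card_erase_of_mem
        (Finset.mem_univ i)]
      have hcard : 1 ≤ Fintype.card (Fin d) := by
        rw [Fintype.card_fin]; omega
      rw [nsmul_eq_mul, mul_one, Finset.card_univ, Nat.cast_sub hcard, Nat.cast_one]
    have hW : Wd u = u i := by
      unfold Wd
      rw [hsum]
      have : u i + ((Fintype.card (Fin d) : ℝ) - 1) - (Fintype.card (Fin d) : ℝ) + 1
          = u i := by ring
      rw [this, max_eq_right (hu i).1]
    rw [hgdef u, hW]
    rw [max_eq_left]
    apply Real.sSup_le _ (hu i).1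
    rintro y ⟨x, hxS, rfl⟩
    have hx := hsub x hxS
    have h1 : Qstar x ≤ x i := qc_le_coord hQstar hx i
    have h2 : x i - u i ≤ max (x i - u i) 0 := le_max_left _ _
    have h3 : max (x i - u i) 0 ≤ ∑ j, max (x j - u j) 0 :=
      Finset.single_le_sum (f := fun j => max (x j - u j) 0) (fun j _ => le_max_right _ _) (Finset.mem_univ i)
    simp only [hg]
    linarith
  · -- mono
    intro u v hu hv huv
    rw [hgdef u]
    apply max_le
    · refine le_trans ?_ (le_max_left _ _ : Wd v ≤ QLowS S Qstar v)
      apply max_le (Wd_nonneg v)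
      have : ∑ i, u i ≤ ∑ i, v i := Finset.sum_le_sum fun i _ => huv i
      have h2 : (∑ i, v i) - (Fintype.card (Fin d) : ℝ) + 1 ≤ Wd v := le_max_right _ _
      linarith
    · apply Real.sSup_le _ (QLowS_nonneg' S Qstar v)
      rintro y ⟨x, hxS, rfl⟩
      have h1 : g u x ≤ g v x := hgmono u v huv x
      have h2 : g v x ≤ sSup (g v '' S) := le_csSup (hbdd v) (Set.mem_image_of_mem _ hxS)
      have h3 : sSup (g v '' S) ≤ QLowS S Qstar v := le_max_right _ _
      linarith
  · -- lipschitz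
    intro u v hu hv
    rw [abs_sub_le_iff]
    constructor
    · have := key u v; linarith
    · have := key v u
      have heq : ∑ i, |v i - u i| = ∑ i, |u i - v i| :=
        Finset.sum_congr rfl fun i _ => abs_sub_comm _ _
      linarith
end
end

section
/- Let d ≥ 2, let S ⊆ [0,1]^d be a nonempty compact set and let Q* be a d-quasi-copula. Then the improved upper Fréchet–Hoeffding bound Q_up^{S,Q*} : [0,1]^d → [0,1] is itself a d-quasi-copula, i.e. it satisfies the boundary conditions (QC1), is increasing in each argument (QC2), and is 1-Lipschitz for the l1-norm (QC3). -/
open scoped BigOperators NNReal ENNReal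

noncomputable section

/-- the improved upper Fréchet–Hoeffding bound is a quasi-copula. -/
theorem stmt4 (d : ℕ) (hd : 2 ≤ d) (S : Set (Fin d → ℝ)) (hne : S.Nonempty)
    (hcomp : IsCompact S) (hsub : ∀ x ∈ S, InCube x)
    (Qstar : (Fin d → ℝ) → ℝ) (hQstar : IsQuasiCopula (Fin d) Qstar) :
    IsQuasiCopula (Fin d) (QUpS S Qstar) := by
  have hι : Nonempty (Fin d) := ⟨⟨0, by omega⟩⟩
  set f : (Fin d → ℝ) → (Fin d → ℝ) → ℝ :=
    fun u x => Qstar x + ∑ i, max (u i - x i) 0 with hf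
  have hfnn : ∀ u x, x ∈ S → 0 ≤ f u x := by
    intro u x hx
    have h1 := hQstar.nonneg x (hsub x hx)
    have h2 : (0:ℝ) ≤ ∑ i, max (u i - x i) 0 :=
      Finset.sum_nonneg fun i _ => le_max_right _ _
    simp only [hf]; linarith
  have hbdd : ∀ u, BddBelow ((f u) '' S) := by
    intro u
    refine ⟨0, ?_⟩
    rintro y ⟨x, hx, rfl⟩
    exact hfnn u x hx
  have himne : ∀ u, ((f u) '' S).Nonempty := fun u => hne.image _
  have hMd_le : ∀ (u : Fin d → ℝ) (i : Fin d), Md u ≤ u i := fun u i =>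
    csInf_le (Set.finite_range u).bddBelow ⟨i, rfl⟩
  have hMd_mem : ∀ u : Fin d → ℝ, ∃ i, Md u = u i := by
    intro u
    obtain ⟨i, hi⟩ := (Set.range_nonempty u).csInf_mem (Set.finite_range u)
    exact ⟨i, hi.symm⟩
  have hQ_eq : ∀ u, QUpS S Qstar u = min (Md u) (sInf ((f u) '' S)) := fun u => rfl
  have hnn : ∀ u : Fin d → ℝ, InCube u → 0 ≤ QUpS S Qstar u := by
    intro u hu
    rw [hQ_eq]
    refine le_min ?_ ?_
    · obtain ⟨i, hi⟩ := hMd_mem u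
      rw [hi]; exact (hu i).1
    · exact le_csInf (himne u) (by rintro y ⟨x, hx, rfl⟩; exact hfnn u x hx)
  have hmono : ∀ u v : Fin d → ℝ, InCube u → InCube v → (∀ i, u i ≤ v i) →
      QUpS S Qstar u ≤ QUpS S Qstar v := by
    intro u v hu hv huv
    rw [hQ_eq, hQ_eq]
    refine min_le_min ?_ ?_
    · obtain ⟨j, hj⟩ := hMd_mem v
      rw [hj]
      exact le_trans (hMd_le u j) (huv j)
    · refine le_csInf (himne v) ?_
      rintro y ⟨x, hx, rfl⟩
      refine le_trans (csInf_le (hbdd u) ⟨x, hx, rfl⟩) ?_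
      simp only [hf]
      exact add_le_add_right (Finset.sum_le_sum fun i _ =>
        max_le_max (by linarith [huv i]) le_rfl) _
  -- the l1-Lipschitz half-estimate
  have hlipaux : ∀ u v : Fin d → ℝ, InCube u → InCube v →
      QUpS S Qstar u ≤ QUpS S Qstar v + ∑ i, |u i - v i| := by
    intro u v hu hv
    set c : ℝ := ∑ i, |u i - v i| with hc
    have hterm : ∀ i : Fin d, |u i - v i| ≤ c := by
      intro i
      exact Finset.single_le_sum (f := fun j => |u j - v j|)
        (fun j _ => abs_nonneg _) (Finset.mem_univ i)
    rw [hQ_eq, hQ_eq]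
    have h1 : Md u ≤ Md v + c := by
      obtain ⟨j, hj⟩ := hMd_mem v
      have := hMd_le u j
      have h2 : u j - v j ≤ |u j - v j| := le_abs_self _
      have := hterm j
      rw [hj]; linarith
    have h2 : sInf ((f u) '' S) ≤ sInf ((f v) '' S) + c := by
      have : sInf ((f u) '' S) - c ≤ sInf ((f v) '' S) := by
        refine le_csInf (himne v) ?_
        rintro y ⟨x, hx, rfl⟩
        have hfx : f u x ≤ f v x + c := by
          simp only [hf, hc]
          rw [add_assoc, ← Finset.sum_add_distrib]
          gcongr with i
          have h3 : u i - v i ≤ |u i - v i| := le_abs_self _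
          have h4 : v i - x i ≤ max (v i - x i) 0 := le_max_left _ _
          refine max_le (by linarith) ?_
          have := abs_nonneg (u i - v i)
          have := le_max_right (v i - x i) (0:ℝ)
          linarith
        have := csInf_le (hbdd u) ⟨x, hx, rfl⟩
        linarith
      linarith
    calc min (Md u) (sInf ((f u) '' S)) ≤ min (Md v + c) (sInf ((f v) '' S) + c) :=
          le_min (le_trans (min_le_left _ _) h1) (le_trans (min_le_right _ _) h2)
      _ = min (Md v) (sInf ((f v) '' S)) + c := min_add_add_right _ _ _
  refine ⟨hnn, ?_, ?_, ?_, hmono, ?_⟩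
  · -- le_one
    intro u hu
    rw [hQ_eq]
    refine le_trans (min_le_left _ _) ?_
    exact le_trans (hMd_le u (Classical.arbitrary _)) (hu _).2
  · -- zero boundary
    intro u hu ⟨i, hi⟩
    refine le_antisymm ?_ (hnn u hu)
    rw [hQ_eq]
    refine le_trans (min_le_left _ _) ?_
    rw [← hi]
    exact hMd_le u i
  · -- one boundary
    intro u hu i hi
    rw [hQ_eq]
    have hMdu : Md u = u i := by
      refine le_antisymm (hMd_le u i) ?_
      refine le_csInf (Set.range_nonempty u) ?_
      rintro y ⟨j, rfl⟩
      rcases eq_or_ne j i with rfl | hji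
      · exact le_rfl
      · rw [hi j hji]; exact (hu i).2
    have hkey : ∀ x ∈ S, u i ≤ f u x := by
      intro x hx
      have hxC := hsub x hx
      set w : Fin d → ℝ := fun j => max (u j) (x j) with hw
      have hwC : InCube w := fun j =>
        ⟨le_trans (hu j).1 (le_max_left _ _), max_le (hu j).2 ((hxC j).2)⟩
      have hQw : Qstar w = w i := by
        refine hQstar.one_boundary w hwC i ?_
        intro j hj
        simp [hw, hi j hj, max_eq_left ((hxC j).2)]
      have hwx : ∀ j, w j - x j = max (u j - x j) 0 := by
        intro j
        show u j ⊔ x j - x j = (u j - x j) ⊔ 0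
        rcases le_total (u j) (x j) with h | h
        · rw [max_eq_right h, max_eq_right (by linarith : u j - x j ≤ (0:ℝ))]
          ring
        · rw [max_eq_left h, max_eq_left (by linarith : (0:ℝ) ≤ u j - x j)]
      have hlip := hQstar.lipschitz w x hwC hxC
      have hsum : ∑ j, |w j - x j| = ∑ j, max (u j - x j) 0 := by
        refine Finset.sum_congr rfl fun j _ => ?_
        rw [abs_of_nonneg (by rw [hwx j]; exact le_max_right _ _), hwx j]
      rw [hsum] at hlip
      have h5 : Qstar w - Qstar x ≤ ∑ j, max (u j - x j) 0 :=
        le_trans (le_abs_self _) hlip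
      have h6 : u i ≤ w i := le_max_left _ _
      rw [hQw] at h5
      simp only [hf]
      linarith
    have hinf : u i ≤ sInf ((f u) '' S) := by
      refine le_csInf (himne u) ?_
      rintro y ⟨x, hx, rfl⟩
      exact hkey x hx
    rw [hMdu, min_eq_left hinf]
  · -- lipschitz
    intro u v hu hv
    rw [abs_sub_le_iff]
    constructor
    · linarith [hlipaux u v hu hv]
    · have := hlipaux v u hv hu
      have hsym : ∑ i, |v i - u i| = ∑ i, |u i - v i| :=
        Finset.sum_congr rfl fun i _ => abs_sub_comm _ _
      linarith
end
end

section
/- Let d ≥ 2 and let ρ be a real-valued functional on the set of d-quasi-copulas that is increasing with respect to the lower orthant order and continuous with respect to pointwise convergence. Let θ satisfy ρ(W_d) < θ < ρ(M_d) and fix u ∈ [0,1]^d. Then the set {Q(u) : Q a d-quasi-copula with ρ(Q) = θ} attains its minimum Q_low^{ρ,θ}(u), and: if θ ≥ ρ(Q_up^{u,W_d(u)}) then Q_low^{ρ,θ}(u) equals the smallest r ∈ [W_d(u), M_d(u)] with ρ(Q_up^{u,r}) = θ (such an r exists), while if θ < ρ(Q_up^{u,W_d(u)}) then Q_low^{ρ,θ}(u)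 = W_d(u). Moreover, the function u ↦ Q_low^{ρ,θ}(u) is a d-quasi-copula. -/
open scoped BigOperators NNReal ENNReal

noncomputable section

/-- The pointwise lower bound over the class of quasi-copulas with `ρ(Q) = θ`. -/
def QLowRho (d : ℕ) (rho : ((Fin d → ℝ) → ℝ) → ℝ) (θ : ℝ) (u : Fin d → ℝ) : ℝ :=
  sInf {y | ∃ Q, IsQuasiCopula (Fin d) Q ∧ rho Q = θ ∧ Q u = y}

section Helpers

open Filter

variable {d : ℕ}

lemma inCube_ones : InCube (fun _ : Fin d => (1:ℝ)) := fun _ => ⟨zero_le_one, le_rfl⟩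

lemma md_exists_min [NeZero d] (v : Fin d → ℝ) : ∃ j, Md v = v j ∧ ∀ i, v j ≤ v i := by
  haveI : Nonempty (Fin d) := Fin.pos_iff_nonempty.mp (Nat.pos_of_ne_zero (NeZero.ne d))
  obtain ⟨j, hj⟩ := Finite.exists_min v
  refine ⟨j, ?_, hj⟩
  have h : IsLeast (Set.range v) (v j) := ⟨⟨j, rfl⟩, by rintro _ ⟨i, rfl⟩; exact hj i⟩
  exact h.csInf_eq

lemma Md_le [NeZero d] (v : Fin d → ℝ) (i : Fin d) : Md v ≤ v i :=
  csInf_le (Set.finite_range v).bddBelow ⟨i, rfl⟩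

lemma le_Md [NeZero d] (v : Fin d → ℝ) (c : ℝ) (h : ∀ i, c ≤ v i) : c ≤ Md v := by
  haveI : Nonempty (Fin d) := Fin.pos_iff_nonempty.mp (Nat.pos_of_ne_zero (NeZero.ne d))
  exact le_csInf (Set.range_nonempty v) (by rintro _ ⟨i, rfl⟩; exact h i)

lemma md_lips [NeZero d] (v w : Fin d → ℝ) : |Md v - Md w| ≤ ∑ i, |v i - w i| := by
  have key : ∀ a b : Fin d → ℝ, Md a - Md b ≤ ∑ i, |a i - b i| := by
    intro a b
    obtain ⟨j, hj, hjm⟩ := md_exists_min b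
    have h1 : Md a ≤ a j := Md_le a j
    have h2 : |a j - b j| ≤ ∑ i, |a i - b i| :=
      Finset.single_le_sum (f := fun i => |a i - b i|) (fun i _ => abs_nonneg _) (Finset.mem_univ j)
    have := abs_nonneg (a j - b j)
    have := le_abs_self (a j - b j)
    linarith [hj ▸ le_refl (Md b)]
  rw [abs_sub_le_iff]
  constructor
  · exact key v w
  · simpa [abs_sub_comm] using key w v

lemma abs_min_sub_min (a x y : ℝ) : |min a x - min a y| ≤ |x - y| := by
  rw [abs_sub_le_iff]
  constructor
  · have : min a x ≤ min a y + |x - y| := by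
      have h1 : min a x ≤ min (a + |x - y|) (y + |x - y|) := by
        apply le_min
        · exact le_trans (min_le_left _ _) (le_add_of_nonneg_right (abs_nonneg _))
        · refine le_trans (min_le_right _ _) ?_
          have := le_abs_self (x - y); linarith
      rwa [min_add_add_right] at h1
    linarith
  · have : min a y ≤ min (a + |x - y|) (x + |x - y|) := by
      apply le_min
      · exact le_trans (min_le_left _ _) (le_add_of_nonneg_right (abs_nonneg _))
      · refine le_trans (min_le_right _ _) ?_
        have := neg_abs_le (x - y); linarith
    rw [min_add_add_right] at this
    linarith

lemma posSum_lips (u v w : Fin d → ℝ) :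
    |∑ i, max (v i - u i) 0 - ∑ i, max (w i - u i) 0| ≤ ∑ i, |v i - w i| := by
  rw [← Finset.sum_sub_distrib]
  refine le_trans (Finset.abs_sum_le_sum_abs _ _) (Finset.sum_le_sum fun i _ => ?_)
  have := abs_max_sub_max_le_abs (v i - u i) (w i - u i) 0
  calc |max (v i - u i) 0 - max (w i - u i) 0| ≤ |(v i - u i) - (w i - u i)| := this
    _ = |v i - w i| := by ring_nf

lemma sum_le_card (v : Fin d → ℝ) (h : InCube v) : ∑ i, v i ≤ (d : ℝ) := by
  calc ∑ i, v i ≤ ∑ _i : Fin d, (1:ℝ) := Finset.sum_le_sum fun i _ => (h i).2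
    _ = d := by simp

lemma sum_erase_bound (v : Fin d → ℝ) (h : InCube v) (i : Fin d) (hd : 1 ≤ d) :
    ∑ j ∈ Finset.univ.erase i, v j ≤ (d : ℝ) - 1 := by
  calc ∑ j ∈ Finset.univ.erase i, v j ≤ ∑ _j ∈ Finset.univ.erase i, (1:ℝ) :=
        Finset.sum_le_sum fun j _ => (h j).2
    _ = ((Finset.univ.erase i).card : ℝ) := by simp
    _ = (d : ℝ) - 1 := by
        rw [Finset.card_erase_of_mem (Finset.mem_univ i)]
        simp
        rw [Nat.cast_sub hd]
        simp

lemma isQC_Wd [NeZero d] : IsQuasiCopula (Fin d) (Wd : (Fin d → ℝ) → ℝ) := by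
  have hd1 : 1 ≤ d := Nat.one_le_iff_ne_zero.mpr (NeZero.ne d)
  constructor
  · intro u _; exact le_max_left _ _
  · intro u hu
    refine max_le zero_le_one ?_
    have := sum_le_card u hu
    simp only [Fintype.card_fin]
    linarith
  · rintro u hu ⟨i, hi⟩
    have h1 : ∑ j, u j ≤ (d:ℝ) - 1 := by
      have := sum_erase_bound u hu i hd1
      have := Finset.sum_erase_add Finset.univ u (Finset.mem_univ i)
      linarith [this ▸ le_refl (∑ j, u j)]
    rw [Wd, max_eq_left]
    simp only [Fintype.card_fin]
    linarith
  · intro u hu i h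
    have h1 : ∑ j ∈ Finset.univ.erase i, u j = (d:ℝ) - 1 := by
      have : ∀ j ∈ Finset.univ.erase i, u j = 1 := by
        intro j hj; exact h j (Finset.ne_of_mem_erase hj)
      rw [Finset.sum_congr rfl this]
      simp [Finset.card_erase_of_mem, Nat.cast_sub hd1]
    have h2 : ∑ j, u j = u i + ((d:ℝ) - 1) := by
      have := Finset.sum_erase_add Finset.univ u (Finset.mem_univ i)
      linarith
    rw [Wd, h2]
    simp only [Fintype.card_fin]
    rw [show u i + ((d:ℝ)-1) - d + 1 = u i by ring]
    exact max_eq_right (hu i).1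
  · intro u v _ _ h
    refine max_le_max le_rfl ?_
    have hs : ∑ i, u i ≤ ∑ i, v i := Finset.sum_le_sum (fun i _ => h i)
    linarith
  · intro u v _ _
    have h1 : |(∑ i, u i - (Fintype.card (Fin d):ℝ) + 1) - (∑ i, v i - (Fintype.card (Fin d):ℝ) + 1)|
        ≤ ∑ i, |u i - v i| := by
      rw [show (∑ i, u i - (Fintype.card (Fin d):ℝ) + 1) - (∑ i, v i - (Fintype.card (Fin d):ℝ) + 1)
        = ∑ i, u i - ∑ i, v i by ring, ← Finset.sum_sub_distrib]
      exact Finset.abs_sum_le_sum_abs _ _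
    calc |Wd u - Wd v| ≤ |(∑ i, u i - (Fintype.card (Fin d):ℝ) + 1) - (∑ i, v i - (Fintype.card (Fin d):ℝ) + 1)| := by
          rw [Wd, Wd, max_comm 0 _, max_comm 0 _]
          exact abs_max_sub_max_le_abs _ _ _
      _ ≤ _ := h1

lemma isQC_Md [NeZero d] : IsQuasiCopula (Fin d) (Md : (Fin d → ℝ) → ℝ) := by
  constructor
  · intro u hu; exact le_Md u 0 fun i => (hu i).1
  · intro u hu
    haveI : Nonempty (Fin d) := Fin.pos_iff_nonempty.mp (Nat.pos_of_ne_zero (NeZero.ne d))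
    obtain ⟨i⟩ := ‹Nonempty (Fin d)›
    exact le_trans (Md_le u i) (hu i).2
  · rintro u hu ⟨i, hi⟩
    refine le_antisymm (hi ▸ Md_le u i) (le_Md u 0 fun j => (hu j).1)
  · intro u hu i h
    refine le_antisymm (Md_le u i) (le_Md u (u i) fun j => ?_)
    by_cases hj : j = i
    · subst hj; exact le_rfl
    · rw [h j hj]; exact (hu i).2
  · intro u v _ _ h
    exact le_Md v (Md u) fun i => le_trans (Md_le u i) (h i)
  · intro u v _ _; exact md_lips u v

end Helpers

section Helpers2

open Filter

variable {d : ℕ} [NeZero d]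

lemma qc_ones {Q : (Fin d → ℝ) → ℝ} (hQ : IsQuasiCopula (Fin d) Q) :
    Q (fun _ => 1) = 1 := by
  haveI : Nonempty (Fin d) := Fin.pos_iff_nonempty.mp (Nat.pos_of_ne_zero (NeZero.ne d))
  obtain ⟨i⟩ := ‹Nonempty (Fin d)›
  exact hQ.one_boundary _ inCube_ones i fun j _ => rfl

lemma qc_le_Md {Q : (Fin d → ℝ) → ℝ} (hQ : IsQuasiCopula (Fin d) Q)
    {v : Fin d → ℝ} (hv : InCube v) : Q v ≤ Md v := by
  refine le_Md v (Q v) fun i => ?_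
  have hw : InCube (fun j => if j = i then v i else 1) := by
    intro j; by_cases hj : j = i <;> simp [hj, (hv i).1, (hv i).2]
  have h1 : Q v ≤ Q (fun j => if j = i then v i else 1) := by
    refine hQ.mono _ _ hv hw fun j => ?_
    by_cases hj : j = i <;> simp [hj, (hv j).2]
  have h2 : Q (fun j => if j = i then v i else 1) = v i := by
    have := hQ.one_boundary _ hw i (fun j hj => by simp [hj])
    simpa using this
  linarith

lemma Wd_le_qc {Q : (Fin d → ℝ) → ℝ} (hQ : IsQuasiCopula (Fin d) Q)
    {v : Fin d → ℝ} (hv : InCube v) : Wd v ≤ Q v := by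
  refine max_le (hQ.nonneg v hv) ?_
  have hlip := hQ.lipschitz (fun _ => 1) v inCube_ones hv
  have h1 : Q (fun _ => 1) = 1 := qc_ones hQ
  have h2 : ∑ i, |(1:ℝ) - v i| = (d:ℝ) - ∑ i, v i := by
    rw [Finset.sum_congr rfl (fun i _ => abs_of_nonneg (by linarith [(hv i).2]))]
    rw [Finset.sum_sub_distrib]
    simp
  rw [h1, h2] at hlip
  have := le_abs_self (1 - Q v)
  have habs : 1 - Q v ≤ (d:ℝ) - ∑ i, v i := le_trans (le_abs_self _) hlip
  simp only [Fintype.card_fin]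
  linarith

lemma Wd_le_Md {v : Fin d → ℝ} (hv : InCube v) : Wd v ≤ Md v :=
  qc_le_Md isQC_Wd hv

lemma qc_plus_bound {Q : (Fin d → ℝ) → ℝ} (hQ : IsQuasiCopula (Fin d) Q)
    {u v : Fin d → ℝ} (hu : InCube u) (hv : InCube v) :
    Q v ≤ Q u + ∑ i, max (v i - u i) 0 := by
  set w : Fin d → ℝ := fun i => max (u i) (v i) with hw
  have hwc : InCube w := fun i => ⟨le_trans (hu i).1 (le_max_left _ _),
    max_le (hu i).2 (hv i).2⟩
  have h1 : Q v ≤ Q w := hQ.mono v w hv hwc fun i => le_max_right _ _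
  have h2 : |Q w - Q u| ≤ ∑ i, |w i - u i| := hQ.lipschitz w u hwc hu
  have h3 : ∑ i, |w i - u i| = ∑ i, max (v i - u i) 0 := by
    refine Finset.sum_congr rfl fun i _ => ?_
    rcases le_total (u i) (v i) with h | h
    · rw [hw]; simp [max_eq_right h, abs_of_nonneg (by linarith : (0:ℝ) ≤ v i - u i),
        max_eq_left (by linarith : (0:ℝ) ≤ v i - u i)]
    · rw [hw]; simp [max_eq_left h, max_eq_right (by linarith : v i - u i ≤ 0)]
  have h4 : Q w - Q u ≤ ∑ i, max (v i - u i) 0 := by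
    rw [← h3]; exact le_trans (le_abs_self _) h2
  linarith

lemma isQC_QUpPt {u : Fin d → ℝ} (hu : InCube u) {r : ℝ}
    (hr1 : Wd u ≤ r) (hr2 : r ≤ Md u) : IsQuasiCopula (Fin d) (QUpPt u r) := by
  have hr0 : 0 ≤ r := le_trans (le_max_left _ _) hr1
  have hsum_nonneg : ∀ v : Fin d → ℝ, (0:ℝ) ≤ ∑ i, max (v i - u i) 0 :=
    fun v => Finset.sum_nonneg fun i _ => le_max_right _ _
  constructor
  · intro v hv
    exact le_min (le_Md v 0 fun i => (hv i).1) (by linarith [hsum_nonneg v])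
  · intro v hv
    haveI : Nonempty (Fin d) := Fin.pos_iff_nonempty.mp (Nat.pos_of_ne_zero (NeZero.ne d))
    obtain ⟨i⟩ := ‹Nonempty (Fin d)›
    exact le_trans (min_le_left _ _) (le_trans (Md_le v i) (hv i).2)
  · rintro v hv ⟨i, hi⟩
    refine le_antisymm ?_ (le_min (le_Md v 0 fun j => (hv j).1) (by linarith [hsum_nonneg v]))
    exact le_trans (min_le_left _ _) (hi ▸ Md_le v i)
  · intro v hv i h
    have hMd : Md v = v i := by
      refine le_antisymm (Md_le v i) (le_Md v (v i) fun j => ?_)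
      by_cases hj : j = i
      · subst hj; exact le_rfl
      · rw [h j hj]; exact (hv i).2
    have hkey : v i ≤ r + ∑ j, max (v j - u j) 0 := by
      have hrW : ∑ j, u j - (d:ℝ) + 1 ≤ r := by
        have := le_trans (le_max_right _ _) hr1
        simpa using this
      have hsplit1 : ∑ j ∈ Finset.univ.erase i, u j + u i = ∑ j, u j :=
        Finset.sum_erase_add _ _ (Finset.mem_univ i)
      have hsplit2 : ∑ j ∈ Finset.univ.erase i, max (v j - u j) 0 + max (v i - u i) 0
          = ∑ j, max (v j - u j) 0 := Finset.sum_erase_add _ _ (Finset.mem_univ i)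
      have hterm : ∀ j ∈ Finset.univ.erase i, max (v j - u j) 0 = 1 - u j := by
        intro j hj
        rw [h j (Finset.ne_of_mem_erase hj)]
        exact max_eq_left (by linarith [(hu j).2])
      have hsum_erase : ∑ j ∈ Finset.univ.erase i, max (v j - u j) 0
          = ((d:ℝ) - 1) - ∑ j ∈ Finset.univ.erase i, u j := by
        rw [Finset.sum_congr rfl hterm, Finset.sum_sub_distrib, Finset.sum_const,
          nsmul_eq_mul, mul_one, Finset.card_erase_of_mem (Finset.mem_univ i),
          Finset.card_univ, Fintype.card_fin,
          Nat.cast_sub (Nat.one_le_iff_ne_zero.mpr (NeZero.ne d)), Nat.cast_one]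
      have hmax : v i - u i ≤ max (v i - u i) 0 := le_max_left _ _
      linarith
    rw [QUpPt, hMd, min_eq_left hkey]
  · intro v w hv hw h
    refine min_le_min (le_Md w (Md v) fun i => le_trans (Md_le v i) (h i)) ?_
    have : ∑ i, max (v i - u i) 0 ≤ ∑ i, max (w i - u i) 0 :=
      Finset.sum_le_sum fun i _ => max_le_max (by linarith [h i]) le_rfl
    linarith
  · intro v w _ _
    have h1 := abs_min_sub_min (Md v) (r + ∑ i, max (v i - u i) 0) (r + ∑ i, max (w i - u i) 0)
    have h2 : |min (Md v) (r + ∑ i, max (w i - u i) 0) - min (Md w) (r + ∑ i, max (w i - u i) 0)|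
        ≤ |Md v - Md w| := by
      rw [min_comm (Md v) _, min_comm (Md w) _]
      exact abs_min_sub_min _ _ _
    have h3 : |(r + ∑ i, max (v i - u i) 0) - (r + ∑ i, max (w i - u i) 0)| ≤ ∑ i, |v i - w i| := by
      rw [show (r + ∑ i, max (v i - u i) 0) - (r + ∑ i, max (w i - u i) 0)
        = ∑ i, max (v i - u i) 0 - ∑ i, max (w i - u i) 0 by ring]
      exact posSum_lips u v w
    have h4 := md_lips v w
    have hmax := abs_min_sub_min_le_max (Md v) (r + ∑ i, max (v i - u i) 0)
      (Md w) (r + ∑ i, max (w i - u i) 0)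
    rw [QUpPt, QUpPt]
    refine le_trans hmax (max_le h4 h3)

end Helpers2

section Helpers3

open Filter

variable {d : ℕ} [NeZero d]

lemma isQC_combo {Q₁ Q₂ : (Fin d → ℝ) → ℝ} (h₁ : IsQuasiCopula (Fin d) Q₁)
    (h₂ : IsQuasiCopula (Fin d) Q₂) {t : ℝ} (ht : t ∈ Set.Icc (0:ℝ) 1) :
    IsQuasiCopula (Fin d) (fun v => (1 - t) * Q₁ v + t * Q₂ v) := by
  obtain ⟨ht0, ht1⟩ := ht
  have h1t : (0:ℝ) ≤ 1 - t := by linarith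
  constructor
  · intro v hv
    have := h₁.nonneg v hv; have := h₂.nonneg v hv
    positivity
  · intro v hv
    have a1 := h₁.le_one v hv; have a2 := h₂.le_one v hv
    nlinarith [h₁.nonneg v hv, h₂.nonneg v hv]
  · rintro v hv hi
    rw [h₁.zero_boundary v hv hi, h₂.zero_boundary v hv hi]; ring
  · intro v hv i h
    rw [h₁.one_boundary v hv i h, h₂.one_boundary v hv i h]; ring
  · intro v w hv hw h
    have m1 := h₁.mono v w hv hw h; have m2 := h₂.mono v w hv hw h
    have := mul_le_mul_of_nonneg_left m1 h1t
    have := mul_le_mul_of_nonneg_left m2 ht0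
    show (1 - t) * Q₁ v + t * Q₂ v ≤ (1 - t) * Q₁ w + t * Q₂ w
    linarith
  · intro v w hv hw
    have l1 := h₁.lipschitz v w hv hw; have l2 := h₂.lipschitz v w hv hw
    have key : |((1-t) * Q₁ v + t * Q₂ v) - ((1-t) * Q₁ w + t * Q₂ w)|
        ≤ (1-t) * |Q₁ v - Q₁ w| + t * |Q₂ v - Q₂ w| := by
      rw [show ((1-t) * Q₁ v + t * Q₂ v) - ((1-t) * Q₁ w + t * Q₂ w)
        = (1-t) * (Q₁ v - Q₁ w) + t * (Q₂ v - Q₂ w) by ring]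
      refine le_trans (abs_add_le _ _) ?_
      rw [abs_mul, abs_mul, abs_of_nonneg h1t, abs_of_nonneg ht0]
    refine le_trans key ?_
    nlinarith [abs_nonneg (Q₁ v - Q₁ w), abs_nonneg (Q₂ v - Q₂ w)]

lemma QUpPt_self {u : Fin d → ℝ} {r : ℝ} (hr2 : r ≤ Md u) : QUpPt u r u = r := by
  have : ∀ i : Fin d, max (u i - u i) 0 = 0 := fun i => by simp
  rw [QUpPt, Finset.sum_congr rfl (fun i _ => this i), Finset.sum_const, smul_zero, add_zero,
    min_eq_right hr2]

lemma QUpPt_Md_eq {u : Fin d → ℝ} : QUpPt u (Md u) = (Md : (Fin d → ℝ) → ℝ) := by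
  funext v
  obtain ⟨j, hj, hjm⟩ := md_exists_min u
  have h1 : Md v ≤ v j := Md_le v j
  have h2 : v j - u j ≤ max (v j - u j) 0 := le_max_left _ _
  have h3 : max (v j - u j) 0 ≤ ∑ i, max (v i - u i) 0 :=
    Finset.single_le_sum (f := fun i => max (v i - u i) 0)
      (fun i _ => le_max_right _ _) (Finset.mem_univ j)
  rw [QUpPt, min_eq_left (by rw [hj]; linarith)]

lemma ivt_seq (rho : ((Fin d → ℝ) → ℝ) → ℝ)
    (hcont : ∀ (Qn : ℕ → (Fin d → ℝ) → ℝ) (Q : (Fin d → ℝ) → ℝ),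
      (∀ n, IsQuasiCopula (Fin d) (Qn n)) → IsQuasiCopula (Fin d) Q →
      (∀ u, InCube u → Filter.Tendsto (fun n => Qn n u) Filter.atTop (nhds (Q u))) →
      Filter.Tendsto (fun n => rho (Qn n)) Filter.atTop (nhds (rho Q)))
    (θ : ℝ) {a b : ℝ} (hab : a ≤ b) {F : ℝ → (Fin d → ℝ) → ℝ}
    (hQC : ∀ t ∈ Set.Icc a b, IsQuasiCopula (Fin d) (F t))
    (hlip : ∀ t ∈ Set.Icc a b, ∀ s ∈ Set.Icc a b, ∀ v, InCube v → |F t v - F s v| ≤ |t - s|)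
    (hfa : rho (F a) ≤ θ) (hfb : θ ≤ rho (F b)) :
    ∃ t₀ ∈ Set.Icc a b, rho (F t₀) = θ ∧ ∀ t ∈ Set.Icc a b, θ ≤ rho (F t) → t₀ ≤ t := by
  set S : Set ℝ := {t | t ∈ Set.Icc a b ∧ θ ≤ rho (F t)} with hS
  have hSb : b ∈ S := ⟨⟨hab, le_rfl⟩, hfb⟩
  have hSne : S.Nonempty := ⟨b, hSb⟩
  have hbdd : BddBelow S := ⟨a, fun t ht => ht.1.1⟩
  set t₀ := sInf S with ht₀
  have ht₀ab : t₀ ∈ Set.Icc a b :=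
    ⟨le_csInf hSne (fun t ht => ht.1.1), csInf_le hbdd hSb⟩
  have hconv : ∀ (tn : ℕ → ℝ), (∀ n, tn n ∈ Set.Icc a b) → ∀ t ∈ Set.Icc a b,
      Tendsto tn atTop (nhds t) →
      Tendsto (fun n => rho (F (tn n))) atTop (nhds (rho (F t))) := by
    intro tn htn t ht hlim
    refine hcont _ _ (fun n => hQC _ (htn n)) (hQC _ ht) ?_
    intro v hv
    have h0 : Tendsto (fun n => |tn n - t|) atTop (nhds 0) := by
      have h0' := hlim.sub (tendsto_const_nhds (x := t))
      simpa using h0'.abs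
    refine tendsto_of_tendsto_of_tendsto_of_le_of_le (g := fun n => F t v - |tn n - t|)
      (h := fun n => F t v + |tn n - t|) ?_ ?_ ?_ ?_
    · simpa using ((tendsto_const_nhds (x := F t v)).sub h0)
    · simpa using ((tendsto_const_nhds (x := F t v)).add h0)
    · intro n
      have h1 := abs_le.mp (hlip (tn n) (htn n) t ht v hv)
      show F t v - |tn n - t| ≤ F (tn n) v
      linarith [h1.1]
    · intro n
      have h1 := abs_le.mp (hlip (tn n) (htn n) t ht v hv)
      show F (tn n) v ≤ F t v + |tn n - t|
      linarith [h1.2]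
  have hge : θ ≤ rho (F t₀) := by
    have hrn : ∀ n : ℕ, ∃ x ∈ S, x < t₀ + 1/(n+1) := fun n =>
      Real.lt_sInf_add_pos hSne (by positivity)
    choose rn hrnS hrnlt using hrn
    have hA : ∀ n : ℕ, t₀ ≤ rn n := fun n => csInf_le hbdd (hrnS n)
    have hB : ∀ n : ℕ, rn n ≤ t₀ + 1/(n+1) := fun n => (hrnlt n).le
    have h1 : Tendsto rn atTop (nhds t₀) := by
      refine tendsto_of_tendsto_of_tendsto_of_le_of_le (g := fun _ => t₀)
        (h := fun n : ℕ => t₀ + 1/(n+1)) tendsto_const_nhds ?_ hA hB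
      simpa using (tendsto_const_nhds (x := t₀)).add tendsto_one_div_add_atTop_nhds_zero_nat
    exact ge_of_tendsto' (hconv rn (fun n => (hrnS n).1) t₀ ht₀ab h1)
      (fun n => (hrnS n).2)
  have hle : rho (F t₀) ≤ θ := by
    rcases eq_or_lt_of_le ht₀ab.1 with heq | hlt
    · rw [← heq]; exact hfa
    · set sn : ℕ → ℝ := fun n => max a (t₀ - 1/(n+1)) with hsn
      have hpos : ∀ n : ℕ, (0:ℝ) < 1/(n+1) := fun n => by positivity
      have hsnIcc : ∀ n, sn n ∈ Set.Icc a b := by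
        intro n
        refine ⟨le_max_left _ _, max_le hab ?_⟩
        have := hpos n
        have := ht₀ab.2
        linarith
      have hsnlt : ∀ n, sn n < t₀ := by
        intro n
        have := hpos n
        exact max_lt hlt (by linarith)
      have hsnS : ∀ n, rho (F (sn n)) < θ := by
        intro n
        by_contra hcon
        push_neg at hcon
        exact absurd (csInf_le hbdd ⟨hsnIcc n, hcon⟩) (not_le.mpr (hsnlt n))
      have h2 : Tendsto sn atTop (nhds t₀) := by
        have := (tendsto_const_nhds (x := a)).max
          (((tendsto_const_nhds (x := t₀)).sub tendsto_one_div_add_atTop_nhds_zero_nat))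
        simpa [hsn, one_div, max_eq_right hlt.le] using this
      exact le_of_tendsto' (hconv sn hsnIcc t₀ ht₀ab h2) (fun n => (hsnS n).le)
  exact ⟨t₀, ht₀ab, le_antisymm hle hge, fun t ht hθt => csInf_le hbdd ⟨ht, hθt⟩⟩

end Helpers3

/-- lower bound on quasi-copulas with a prescribed functional value. -/
theorem stmt6 (d : ℕ) (hd : 2 ≤ d) (rho : ((Fin d → ℝ) → ℝ) → ℝ)
    (hmono : ∀ Q₁ Q₂, IsQuasiCopula (Fin d) Q₁ → IsQuasiCopula (Fin d) Q₂ →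
      (∀ u, InCube u → Q₁ u ≤ Q₂ u) → rho Q₁ ≤ rho Q₂)
    (hcont : ∀ (Qn : ℕ → (Fin d → ℝ) → ℝ) (Q : (Fin d → ℝ) → ℝ),
      (∀ n, IsQuasiCopula (Fin d) (Qn n)) → IsQuasiCopula (Fin d) Q →
      (∀ u, InCube u → Filter.Tendsto (fun n => Qn n u) Filter.atTop (nhds (Q u))) →
      Filter.Tendsto (fun n => rho (Qn n)) Filter.atTop (nhds (rho Q)))
    (θ : ℝ) (hθ₁ : rho Wd < θ) (hθ₂ : θ < rho Md) :
    (∀ u : Fin d → ℝ, InCube u →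
      ((∃ Q, IsQuasiCopula (Fin d) Q ∧ rho Q = θ ∧ Q u = QLowRho d rho θ u) ∧
        (∀ Q, IsQuasiCopula (Fin d) Q → rho Q = θ → QLowRho d rho θ u ≤ Q u) ∧
        (rho (QUpPt u (Wd u)) ≤ θ →
          ∃ r ∈ Set.Icc (Wd u) (Md u), rho (QUpPt u r) = θ ∧
            (∀ r' ∈ Set.Icc (Wd u) (Md u), rho (QUpPt u r') = θ → r ≤ r') ∧
            QLowRho d rho θ u = r) ∧
        (θ < rho (QUpPt u (Wd u)) → QLowRho d rho θ u = Wd u))) ∧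
    IsQuasiCopula (Fin d) (QLowRho d rho θ) := by
  haveI : NeZero d := ⟨by omega⟩
  -- Lipschitz-in-t estimate for convex combinations
  have hlipcombo : ∀ (Q₁ Q₂ : (Fin d → ℝ) → ℝ), IsQuasiCopula (Fin d) Q₁ →
      IsQuasiCopula (Fin d) Q₂ → ∀ (t s : ℝ) (v : Fin d → ℝ), InCube v →
      |((1-t) * Q₁ v + t * Q₂ v) - ((1-s) * Q₁ v + s * Q₂ v)| ≤ |t - s| := by
    intro Q₁ Q₂ h₁ h₂ t s v hv
    have e : ((1-t) * Q₁ v + t * Q₂ v) - ((1-s) * Q₁ v + s * Q₂ v)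
        = (t - s) * (Q₂ v - Q₁ v) := by ring
    rw [e, abs_mul]
    have h1 : |Q₂ v - Q₁ v| ≤ 1 := abs_le.mpr
      ⟨by linarith [h₂.nonneg v hv, h₁.le_one v hv],
       by linarith [h₂.le_one v hv, h₁.nonneg v hv]⟩
    nlinarith [abs_nonneg (t - s)]
  -- Step 1 : there exists a quasi-copula with prescribed functional value
  obtain ⟨t₀, ht₀, hρ₀, -⟩ := ivt_seq rho hcont θ (zero_le_one)
    (F := fun t v => (1-t) * Wd v + t * Md v)
    (fun t ht => isQC_combo isQC_Wd isQC_Md ht)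
    (fun t _ s _ v hv => hlipcombo _ _ isQC_Wd isQC_Md t s v hv)
    (by
      have e : (fun v => (1 - (0:ℝ)) * Wd v + (0:ℝ) * Md v) = (Wd : (Fin d → ℝ) → ℝ) :=
        funext fun v => by ring
      show rho (fun v => (1 - (0:ℝ)) * Wd v + (0:ℝ) * Md v) ≤ θ
      rw [e]; exact hθ₁.le)
    (by
      have e : (fun v => (1 - (1:ℝ)) * Wd v + (1:ℝ) * Md v) = (Md : (Fin d → ℝ) → ℝ) :=
        funext fun v => by ring
      show θ ≤ rho (fun v => (1 - (1:ℝ)) * Wd v + (1:ℝ) * Md v)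
      rw [e]; exact hθ₂.le)
  set Q₀ : (Fin d → ℝ) → ℝ := fun v => (1-t₀) * Wd v + t₀ * Md v with hQ₀def
  have hQ₀ : IsQuasiCopula (Fin d) Q₀ := isQC_combo isQC_Wd isQC_Md ht₀
  have hAne : ∀ u : Fin d → ℝ,
      {y | ∃ Q, IsQuasiCopula (Fin d) Q ∧ rho Q = θ ∧ Q u = y}.Nonempty :=
    fun u => ⟨Q₀ u, Q₀, hQ₀, hρ₀, rfl⟩
  have hAbdd : ∀ u : Fin d → ℝ, InCube u →
      BddBelow {y | ∃ Q, IsQuasiCopula (Fin d) Q ∧ rho Q = θ ∧ Q u = y} := by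
    intro u hu
    refine ⟨0, ?_⟩
    rintro y ⟨Q, hQ, -, rfl⟩
    exact hQ.nonneg u hu
  -- Step 2 : pointwise analysis
  have hmain : ∀ u : Fin d → ℝ, InCube u →
      ((∃ Q, IsQuasiCopula (Fin d) Q ∧ rho Q = θ ∧ Q u = QLowRho d rho θ u) ∧
        (∀ Q, IsQuasiCopula (Fin d) Q → rho Q = θ → QLowRho d rho θ u ≤ Q u) ∧
        (rho (QUpPt u (Wd u)) ≤ θ →
          ∃ r ∈ Set.Icc (Wd u) (Md u), rho (QUpPt u r) = θ ∧
            (∀ r' ∈ Set.Icc (Wd u) (Md u), rho (QUpPt u r') = θ → r ≤ r') ∧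
            QLowRho d rho θ u = r) ∧
        (θ < rho (QUpPt u (Wd u)) → QLowRho d rho θ u = Wd u)) := by
    intro u hu
    have hab : Wd u ≤ Md u := Wd_le_Md hu
    by_cases hcase : rho (QUpPt u (Wd u)) ≤ θ
    · -- case θ ≥ ρ(Q_up^{u, W(u)})
      obtain ⟨r₀, hr₀Icc, hr₀θ, hr₀min⟩ := ivt_seq rho hcont θ hab
        (F := fun r => QUpPt u r)
        (fun r hr => isQC_QUpPt hu hr.1 hr.2)
        (by
          intro r _ s _ v _
          show |QUpPt u r v - QUpPt u s v| ≤ |r - s|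
          rw [QUpPt, QUpPt]
          have h := abs_min_sub_min (Md v) (r + ∑ i, max (v i - u i) 0)
            (s + ∑ i, max (v i - u i) 0)
          rwa [add_sub_add_right_eq_sub] at h)
        hcase
        (by
          show θ ≤ rho (QUpPt u (Md u))
          rw [QUpPt_Md_eq]; exact hθ₂.le)
      have hQr₀ : IsQuasiCopula (Fin d) (QUpPt u r₀) := isQC_QUpPt hu hr₀Icc.1 hr₀Icc.2
      have hmem : QUpPt u r₀ u = r₀ := QUpPt_self hr₀Icc.2
      have hleast : IsLeast {y | ∃ Q, IsQuasiCopula (Fin d) Q ∧ rho Q = θ ∧ Q u = y} r₀ := by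
        constructor
        · exact ⟨QUpPt u r₀, hQr₀, hr₀θ, hmem⟩
        · rintro y ⟨Q, hQ, hQθ, rfl⟩
          have hs1 : Wd u ≤ Q u := Wd_le_qc hQ hu
          have hs2 : Q u ≤ Md u := qc_le_Md hQ hu
          have hQle : ∀ v, InCube v → Q v ≤ QUpPt u (Q u) v := fun v hv =>
            le_min (qc_le_Md hQ hv) (qc_plus_bound hQ hu hv)
          have hrr := hmono Q (QUpPt u (Q u)) hQ (isQC_QUpPt hu hs1 hs2) hQle
          exact hr₀min (Q u) ⟨hs1, hs2⟩ (by rw [← hQθ]; exact hrr)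
      have hQLr : QLowRho d rho θ u = r₀ := hleast.csInf_eq
      refine ⟨⟨QUpPt u r₀, hQr₀, hr₀θ, by rw [hmem, hQLr]⟩,
        fun Q hQ hθQ => hQLr ▸ hleast.2 ⟨Q, hQ, hθQ, rfl⟩,
        fun _ => ⟨r₀, hr₀Icc, hr₀θ, fun r' hr' hr'θ => hr₀min r' hr' hr'θ.ge, hQLr⟩,
        fun hcon => absurd hcase (not_le.mpr hcon)⟩
    · -- case θ < ρ(Q_up^{u, W(u)})
      push_neg at hcase
      have hQa : IsQuasiCopula (Fin d) (QUpPt u (Wd u)) := isQC_QUpPt hu le_rfl hab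
      obtain ⟨s₀, hs₀, hρs₀, -⟩ := ivt_seq rho hcont θ (zero_le_one)
        (F := fun t v => (1-t) * Wd v + t * QUpPt u (Wd u) v)
        (fun t ht => isQC_combo isQC_Wd hQa ht)
        (fun t _ s _ v hv => hlipcombo _ _ isQC_Wd hQa t s v hv)
        (by
          have e : (fun v => (1 - (0:ℝ)) * Wd v + (0:ℝ) * QUpPt u (Wd u) v)
              = (Wd : (Fin d → ℝ) → ℝ) := funext fun v => by ring
          show rho (fun v => (1 - (0:ℝ)) * Wd v + (0:ℝ) * QUpPt u (Wd u) v) ≤ θ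
          rw [e]; exact hθ₁.le)
        (by
          have e : (fun v => (1 - (1:ℝ)) * Wd v + (1:ℝ) * QUpPt u (Wd u) v)
              = QUpPt u (Wd u) := funext fun v => by ring
          show θ ≤ rho (fun v => (1 - (1:ℝ)) * Wd v + (1:ℝ) * QUpPt u (Wd u) v)
          rw [e]; exact hcase.le)
      set Q₁ : (Fin d → ℝ) → ℝ := fun v => (1-s₀) * Wd v + s₀ * QUpPt u (Wd u) v with hQ₁def
      have hQ₁ : IsQuasiCopula (Fin d) Q₁ := isQC_combo isQC_Wd hQa hs₀
      have hQau : QUpPt u (Wd u) u = Wd u := QUpPt_self hab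
      have hQ₁u : Q₁ u = Wd u := by rw [hQ₁def]; dsimp only; rw [hQau]; ring
      have hleast : IsLeast {y | ∃ Q, IsQuasiCopula (Fin d) Q ∧ rho Q = θ ∧ Q u = y} (Wd u) := by
        constructor
        · exact ⟨Q₁, hQ₁, hρs₀, hQ₁u⟩
        · rintro y ⟨Q, hQ, -, rfl⟩
          exact Wd_le_qc hQ hu
      have hQLr : QLowRho d rho θ u = Wd u := hleast.csInf_eq
      exact ⟨⟨Q₁, hQ₁, hρs₀, by rw [hQ₁u, hQLr]⟩,
        fun Q hQ hθQ => hQLr ▸ hleast.2 ⟨Q, hQ, hθQ, rfl⟩,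
        fun hcon => absurd hcon (not_le.mpr hcase),
        fun _ => hQLr⟩
  refine ⟨hmain, ?_⟩
  -- Step 3 : the lower bound is itself a quasi-copula
  constructor
  · intro u hu
    exact le_csInf (hAne u) (by rintro y ⟨Q, hQ, -, rfl⟩; exact hQ.nonneg u hu)
  · intro u hu
    exact csInf_le_of_le (hAbdd u hu) ⟨Q₀, hQ₀, hρ₀, rfl⟩ (hQ₀.le_one u hu)
  · rintro u hu hzero
    refine le_antisymm (csInf_le_of_le (hAbdd u hu) ⟨Q₀, hQ₀, hρ₀, rfl⟩
      (le_of_eq (hQ₀.zero_boundary u hu hzero))) ?_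
    exact le_csInf (hAne u) (by rintro y ⟨Q, hQ, -, rfl⟩; exact hQ.nonneg u hu)
  · intro u hu i h
    refine le_antisymm (csInf_le_of_le (hAbdd u hu) ⟨Q₀, hQ₀, hρ₀, rfl⟩
      (le_of_eq (hQ₀.one_boundary u hu i h))) ?_
    refine le_csInf (hAne u) ?_
    rintro y ⟨Q, hQ, -, rfl⟩
    exact (hQ.one_boundary u hu i h).ge
  · intro u v hu hv huv
    refine le_csInf (hAne v) ?_
    rintro y ⟨Q, hQ, hQθ, rfl⟩
    exact le_trans (csInf_le (hAbdd u hu) ⟨Q, hQ, hQθ, rfl⟩) (hQ.mono u v hu hv huv)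
  · intro u v hu hv
    rw [abs_sub_le_iff]
    constructor
    · have h1 : ∀ y ∈ {y | ∃ Q, IsQuasiCopula (Fin d) Q ∧ rho Q = θ ∧ Q v = y},
          QLowRho d rho θ u - ∑ i, |u i - v i| ≤ y := by
        rintro y ⟨Q, hQ, hQθ, rfl⟩
        have ha : QLowRho d rho θ u ≤ Q u := csInf_le (hAbdd u hu) ⟨Q, hQ, hQθ, rfl⟩
        have hb : Q u - Q v ≤ ∑ i, |u i - v i| :=
          le_trans (le_abs_self _) (hQ.lipschitz u v hu hv)
        linarith
      have := le_csInf (hAne v) h1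
      have h2 : QLowRho d rho θ v = sInf {y | ∃ Q, IsQuasiCopula (Fin d) Q ∧ rho Q = θ ∧ Q v = y} := rfl
      linarith [h2 ▸ this]
    · have h1 : ∀ y ∈ {y | ∃ Q, IsQuasiCopula (Fin d) Q ∧ rho Q = θ ∧ Q u = y},
          QLowRho d rho θ v - ∑ i, |u i - v i| ≤ y := by
        rintro y ⟨Q, hQ, hQθ, rfl⟩
        have ha : QLowRho d rho θ v ≤ Q v := csInf_le (hAbdd v hv) ⟨Q, hQ, hQθ, rfl⟩
        have hb : Q v - Q u ≤ ∑ i, |u i - v i| := by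
          have := le_trans (le_abs_self _) (hQ.lipschitz v u hv hu)
          have he : ∑ i, |v i - u i| = ∑ i, |u i - v i| :=
            Finset.sum_congr rfl fun i _ => abs_sub_comm _ _
          linarith [he ▸ this]
        linarith
      have := le_csInf (hAne u) h1
      have h2 : QLowRho d rho θ u = sInf {y | ∃ Q, IsQuasiCopula (Fin d) Q ∧ rho Q = θ ∧ Q u = y} := rfl
      linarith [h2 ▸ this]
end
end

section
/- Let d ≥ 2 and let I_1, …, I_k be subsets of {1, …, d} with |I_j| ≥ 2 for all j and |I_i ∩ I_j| ≤ 1 for i ≠ j. For each j let Q_j^low and Q_j^up be |I_j|-quasi-copulas with Q_j^low(v) ≤ Q_j^up(v) for all v. Then every d-quasi-copula Q whose I_j-margins satisfy Q_j^low(v) ≤ Q_{I_j}(v) ≤ Q_j^up(v) for all v ∈ [0,1]^{|I_j|} and all j = 1, …, k fulfills Q_low^I(u) ≤ Q(u) ≤ Q_up^I(u) for all u ∈ [0,1]^d. -/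
open scoped BigOperators NNReal ENNReal

noncomputable section

/-- The improved lower Fréchet–Hoeffding bound from information on the
lower-dimensional margins `I_1, …, I_k`:
`max( max_j ( Q_j^low(u_{I_j}) + Σ_{l ∉ I_j} (u_l − 1) ), W_d(u) )`. -/
def QLowI {d k : ℕ} (J : Fin k → Finset (Fin d))
    (Ql : (j : Fin k) → ((↥(J j) → ℝ) → ℝ)) (u : Fin d → ℝ) : ℝ :=
  max (⨆ j, (Ql j (fun i => u i.val) + ∑ l ∈ (J j)ᶜ, (u l - 1))) (Wd u)

/-- The improved upper Fréchet–Hoeffding bound from information on the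
lower-dimensional margins `I_1, …, I_k`:
`min( min_j Q_j^up(u_{I_j}), M_d(u) )`. -/
def QUpI {d k : ℕ} (J : Fin k → Finset (Fin d))
    (Qu : (j : Fin k) → ((↥(J j) → ℝ) → ℝ)) (u : Fin d → ℝ) : ℝ :=
  min (⨅ j, Qu j (fun i => u i.val)) (Md u)

/-- bounds on a quasi-copula whose margins lie between given quasi-copulas. -/
theorem stmt7 (d k : ℕ) (hd : 2 ≤ d) (hk : 0 < k) (J : Fin k → Finset (Fin d))
    (hcard : ∀ j, 2 ≤ (J j).card)
    (hinter : ∀ i j, i ≠ j → ((J i) ∩ (J j)).card ≤ 1)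
    (Ql Qu : (j : Fin k) → ((↥(J j) → ℝ) → ℝ))
    (hQl : ∀ j, IsQuasiCopula ↥(J j) (Ql j)) (hQu : ∀ j, IsQuasiCopula ↥(J j) (Qu j))
    (hle : ∀ j, ∀ v : ↥(J j) → ℝ, InCube v → Ql j v ≤ Qu j v)
    (Q : (Fin d → ℝ) → ℝ) (hQ : IsQuasiCopula (Fin d) Q)
    (hmar : ∀ j, ∀ v : ↥(J j) → ℝ, InCube v →
      Ql j v ≤ marginQ Q (J j) v ∧ marginQ Q (J j) v ≤ Qu j v)
    (u : Fin d → ℝ) (hu : InCube u) :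
    QLowI J Ql u ≤ Q u ∧ Q u ≤ QUpI J Qu u := by
  haveI : Nonempty (Fin k) := ⟨⟨0, hk⟩⟩
  haveI : Nonempty (Fin d) := ⟨⟨0, by omega⟩⟩
  obtain ⟨hn, h1, hz, hob, hmono, hlip⟩ := hQ
  constructor
  · apply max_le
    · apply ciSup_le
      intro j
      set v : Fin d → ℝ := fun i => if i ∈ J j then u i else 1 with hv
      have hvin : InCube v := by
        intro i
        by_cases h : i ∈ J j <;> simp [v, h, (hu i).1, (hu i).2]
      have huv : InCube (fun i : ↥(J j) => u i.val) := fun i => hu i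
      have hmar1 : Ql j (fun i => u i.val) ≤ marginQ Q (J j) (fun i => u i.val) :=
        (hmar j _ huv).1
      have hmeq : marginQ Q (J j) (fun i : ↥(J j) => u i.val) = Q v := by
        unfold marginQ
        congr 1
      have hl := hlip v u hvin hu
      have hsum : ∑ i, |v i - u i| = ∑ l ∈ (J j)ᶜ, (1 - u l) := by
        calc ∑ i, |v i - u i|
            = ∑ i, (if i ∈ (J j)ᶜ then (1 - u i) else 0) := by
              apply Finset.sum_congr rfl
              intro i _
              by_cases h : i ∈ J j
              · simp [v, h]
              · simp [v, h, abs_of_nonneg (by linarith [(hu i).2] : (0:ℝ) ≤ 1 - u i)]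
          _ = ∑ l ∈ (J j)ᶜ, (1 - u l) := by
              rw [Finset.sum_ite_mem, Finset.univ_inter]
      have key : ∑ l ∈ (J j)ᶜ, (u l - 1) + ∑ l ∈ (J j)ᶜ, (1 - u l) = 0 := by
        rw [← Finset.sum_add_distrib]
        simp
      have habs : Q v - Q u ≤ ∑ i, |v i - u i| := (abs_le.mp hl).2
      rw [hsum] at habs
      rw [hmeq] at hmar1
      linarith
    · apply max_le (hn u hu)
      have hone : InCube (fun _ : Fin d => (1:ℝ)) := fun _ => ⟨zero_le_one, le_refl 1⟩
      have hQ1 : Q (fun _ => 1) = 1 :=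
        hob (fun _ => 1) hone (Classical.arbitrary _) (fun _ _ => rfl)
      have hl := hlip (fun _ => 1) u hone hu
      have hsum : ∑ i, |(1:ℝ) - u i| = (Fintype.card (Fin d) : ℝ) - ∑ i, u i := by
        calc ∑ i, |(1:ℝ) - u i| = ∑ i, ((1:ℝ) - u i) := by
              apply Finset.sum_congr rfl
              intro i _
              exact abs_of_nonneg (by linarith [(hu i).2])
          _ = _ := by
              rw [Finset.sum_sub_distrib]
              simp [Finset.card_univ]
      rw [hsum] at hl
      have := (abs_le.mp hl).2
      linarith
  · apply le_min
    · apply le_ciInf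
      intro j
      set v : Fin d → ℝ := fun i => if i ∈ J j then u i else 1 with hv
      have hvin : InCube v := by
        intro i
        by_cases h : i ∈ J j <;> simp [v, h, (hu i).1, (hu i).2]
      have huv : InCube (fun i : ↥(J j) => u i.val) := fun i => hu i
      have hmar2 : marginQ Q (J j) (fun i => u i.val) ≤ Qu j (fun i => u i.val) :=
        (hmar j _ huv).2
      have hmeq : marginQ Q (J j) (fun i : ↥(J j) => u i.val) = Q v := by
        unfold marginQ
        congr 1
      have hle' : Q u ≤ Q v := by
        apply hmono u v hu hvin
        intro i
        by_cases h : i ∈ J j <;> simp [v, h, (hu i).2]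
      rw [hmeq] at hmar2
      linarith
    · apply le_csInf (Set.range_nonempty u)
      rintro b ⟨i, rfl⟩
      set w : Fin d → ℝ := fun l => if l = i then u i else 1 with hw
      have hwin : InCube w := by
        intro l
        by_cases h : l = i <;> simp [w, h, (hu i).1, (hu i).2]
      have hQw : Q w = u i := by
        have := hob w hwin i (fun l hl => by simp [w, hl])
        simpa [w] using this
      have : Q u ≤ Q w := by
        apply hmono u w hu hwin
        intro l
        by_cases h : l = i <;> simp [w, h, (hu l).2]
      linarith
end
end

section
/- Let d ≥ 2, let S ⊆ [0,1]^d be a nonempty compact set, and let Qhat* be a quasi-survival function; set Q*(v) := Qhat*(1 − v_1, …, 1 − v_d) (which is a d-quasi-copula) and Shat := {(1 − x_1, …, 1 − x_d) : x ∈ S}. Then every d-copula C whose survival function satisfies Chat(x) = Qhat*(x) for all x ∈ S fulfills Q_low^{Shat,Q*}(1 − u_1, …, 1 − u_d) ≤ Chat(u) ≤ Q_up^{Shat,Q*}(1 − u_1, …, 1 − u_d) for all u ∈ [0,1]^d, and moreover Q_low^{Shat,Q*}(1 − u) = Chat(u) = Q_up^{Shat,Q*}(1 − u) for all u ∈ S.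 -/
open scoped BigOperators NNReal ENNReal

noncomputable section

private lemma sum_split {d : ℕ} (j : Fin d) (g : Finset (Fin d) → ℝ) :
    ∑ J : Finset (Fin d), g J
      = ∑ J ∈ Finset.univ.filter (fun J => j ∉ J), (g J + g (insert j J)) := by
  rw [Finset.sum_add_distrib]
  have h1 : ∑ J ∈ Finset.univ.filter (fun J => j ∉ J), g (insert j J)
      = ∑ J ∈ Finset.univ.filter (fun J => j ∈ J), g J := by
    apply Finset.sum_bij (fun J _ => insert j J)
    · intro J hJ
      simp only [Finset.mem_filter, Finset.mem_univ, true_and] at hJ ⊢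
      exact Finset.mem_insert_self j J
    · intro J1 h1 J2 h2 h
      simp only [Finset.mem_filter, Finset.mem_univ, true_and] at h1 h2
      have := congrArg (fun T => Finset.erase T j) h
      simpa [Finset.erase_insert h1, Finset.erase_insert h2] using this
    · intro J hJ
      simp only [Finset.mem_filter, Finset.mem_univ, true_and] at hJ
      exact ⟨J.erase j, by simp, Finset.insert_erase hJ⟩
    · intro J hJ; rfl
  rw [h1, add_comm]
  exact (Finset.sum_filter_add_sum_filter_not Finset.univ (fun J => j ∈ J) g).symm
lemma boxVolume_split {d : ℕ} (Q : (Fin d → ℝ) → ℝ) (a b : Fin d → ℝ) (j : Fin d) (r : ℝ) :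
    boxVolume Q a b
      = boxVolume Q (Function.update a j r) b + boxVolume Q a (Function.update b j r) := by
  unfold boxVolume
  rw [sum_split j, sum_split j, sum_split j, ← Finset.sum_add_distrib]
  apply Finset.sum_congr rfl
  intro J hJ
  have hj : j ∉ J := by simpa using (Finset.mem_filter.mp hJ).2
  have hcard : (insert j J).card = J.card + 1 := Finset.card_insert_of_notMem hj
  have e1 : (fun i => if i ∈ J then Function.update a j r i else b i)
      = (fun i => if i ∈ J then a i else b i) := by
    funext i
    by_cases hi : i ∈ J
    · have hij : i ≠ j := fun h => hj (h ▸ hi)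
      simp [hi, Function.update_of_ne hij]
    · simp [hi]
  have e2 : (fun i => if i ∈ insert j J then Function.update a j r i else b i)
      = (fun i => if i ∈ J then a i else Function.update b j r i) := by
    funext i
    by_cases hij : i = j
    · subst hij; simp [hj]
    · by_cases hi : i ∈ J
      · simp [Finset.mem_insert, hi, hij, Function.update_of_ne hij]
      · simp [Finset.mem_insert, hi, hij, Function.update_of_ne hij]
  have e3 : (fun i => if i ∈ insert j J then a i else Function.update b j r i)
      = (fun i => if i ∈ insert j J then a i else b i) := by
    funext i
    by_cases hi : i ∈ insert j J
    · simp [hi]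
    · have hij : i ≠ j := fun h => hi (h ▸ Finset.mem_insert_self j J)
      simp [hi, Function.update_of_ne hij]
  rw [e1, e2, e3, hcard, pow_succ]
  ring
lemma one_cube {d : ℕ} : InCube (fun _ : Fin d => (1:ℝ)) := fun _ => ⟨zero_le_one, le_rfl⟩

lemma InCube.update {d : ℕ} {u : Fin d → ℝ} (hu : InCube u) {j : Fin d} {r : ℝ}
    (h0 : 0 ≤ r) (h1 : r ≤ 1) : InCube (Function.update u j r) := by
  intro k
  by_cases hk : k = j
  · subst hk; simp [h0, h1]
  · simpa [Function.update_of_ne hk] using hu k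

lemma survival_update_eq {d : ℕ} (C : (Fin d → ℝ) → ℝ) (u : Fin d → ℝ) (i : Fin d)
    (s t : ℝ) :
    survivalF C (Function.update u i s) - survivalF C (Function.update u i t)
      = boxVolume C (Function.update u i s) (Function.update (fun _ => 1) i t) := by
  unfold survivalF boxVolume
  rw [sum_split i, sum_split i, sum_split i, ← Finset.sum_sub_distrib]
  apply Finset.sum_congr rfl
  intro J hJ
  have hj : i ∉ J := by simpa using (Finset.mem_filter.mp hJ).2
  have hcard : (insert i J).card = J.card + 1 := Finset.card_insert_of_notMem hj
  -- A_J = B_J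
  have eA : (fun k => if k ∈ J then Function.update u i s k else (1:ℝ))
      = (fun k => if k ∈ J then Function.update u i t k else (1:ℝ)) := by
    funext k
    by_cases hk : k ∈ J
    · have hki : k ≠ i := fun h => hj (h ▸ hk)
      simp [hk, Function.update_of_ne hki]
    · simp [hk]
  -- C_J = B_{J∪i}
  have eB : (fun k => if k ∈ J then Function.update u i s k
        else Function.update (fun _ => (1:ℝ)) i t k)
      = (fun k => if k ∈ insert i J then Function.update u i t k else (1:ℝ)) := by
    funext k
    by_cases hki : k = i
    · subst hki; simp [hj]
    · by_cases hk : k ∈ J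
      · simp [Finset.mem_insert, hk, hki, Function.update_of_ne hki]
      · simp [Finset.mem_insert, hk, hki, Function.update_of_ne hki]
  -- C_{J∪i} = A_{J∪i}
  have eC : (fun k => if k ∈ insert i J then Function.update u i s k
        else Function.update (fun _ => (1:ℝ)) i t k)
      = (fun k => if k ∈ insert i J then Function.update u i s k else (1:ℝ)) := by
    funext k
    by_cases hk : k ∈ insert i J
    · simp [hk]
    · have hki : k ≠ i := fun h => hk (h ▸ Finset.mem_insert_self i J)
      simp [hk, Function.update_of_ne hki]
  rw [eA, eB, eC, hcard, pow_succ]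
  ring
lemma boxVolume_lower_le {d : ℕ} {C : (Fin d → ℝ) → ℝ} (hC : IsCopula (Fin d) C)
    {a b : Fin d → ℝ} (ha : InCube a) (hb : InCube b) (hab : ∀ k, a k ≤ b k)
    (j : Fin d) (r : ℝ) (hr0 : 0 ≤ r) (hra : r ≤ a j) :
    boxVolume C a b ≤ boxVolume C (Function.update a j r) b := by
  have key := boxVolume_split C (Function.update a j r) b j (a j)
  have e : Function.update (Function.update a j r) j (a j) = a := by
    rw [Function.update_idem, Function.update_eq_self]
  rw [e] at key
  have h2 : 0 ≤ boxVolume C (Function.update a j r) (Function.update b j (a j)) := by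
    apply hC.2
    · exact ha.update hr0 (hra.trans (ha j).2)
    · exact hb.update (ha j).1 (ha j).2
    · intro k
      by_cases hk : k = j
      · subst hk; simpa using hra
      · simpa [Function.update_of_ne hk] using hab k
  linarith
lemma boxVolume_zero_out {d : ℕ} {C : (Fin d → ℝ) → ℝ} (hC : IsCopula (Fin d) C)
    {a b : Fin d → ℝ} (ha : InCube a) (hb : InCube b) (hab : ∀ k, a k ≤ b k)
    (T : Finset (Fin d)) :
    boxVolume C a b ≤ boxVolume C (fun k => if k ∈ T then 0 else a k) b := by
  induction T using Finset.induction_on with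
  | empty => simp
  | @insert j T hj ih =>
    have haT : InCube (fun k => if k ∈ T then (0:ℝ) else a k) := by
      intro k
      by_cases hk : k ∈ T <;> simp [hk, (ha k).1, (ha k).2, ha k]
    have habT : ∀ k, (fun k => if k ∈ T then (0:ℝ) else a k) k ≤ b k := by
      intro k
      by_cases hk : k ∈ T <;> simp [hk, (hb k).1, hab k]
    have step := boxVolume_lower_le hC haT hb habT j 0 le_rfl
      (by by_cases hk : j ∈ T <;> simp [hk, (ha j).1])
    have e : Function.update (fun k => if k ∈ T then (0:ℝ) else a k) j 0
        = (fun k => if k ∈ insert j T then (0:ℝ) else a k) := by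
      funext k
      by_cases hk : k = j
      · subst hk; simp
      · simp [Function.update_of_ne hk, Finset.mem_insert, hk]
    rw [e] at step
    exact ih.trans step
lemma boxVolume_corner {d : ℕ} {C : (Fin d → ℝ) → ℝ} (hC : IsQuasiCopula (Fin d) C)
    (i : Fin d) (s t : ℝ) (hs : 0 ≤ s) (hst : s ≤ t) (ht : t ≤ 1) :
    boxVolume C (fun j => if j = i then s else 0)
      (Function.update (fun _ => 1) i t) = t - s := by
  have ht0 : 0 ≤ t := hs.trans hst
  have hs1 : s ≤ 1 := hst.trans ht
  unfold boxVolume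
  have hvan : ∀ J ∈ (Finset.univ : Finset (Finset (Fin d))),
      J ∉ ({∅, {i}} : Finset (Finset (Fin d))) →
      (-1:ℝ) ^ J.card * C (fun k => if k ∈ J then (if k = i then s else 0)
        else Function.update (fun _ => (1:ℝ)) i t k) = 0 := by
    intro J _ hJ
    simp only [Finset.mem_insert, Finset.mem_singleton] at hJ
    push_neg at hJ
    obtain ⟨hJ0, hJi⟩ := hJ
    have : ∃ k ∈ J, k ≠ i := by
      by_contra h
      push_neg at h
      have : J ⊆ {i} := fun k hk => Finset.mem_singleton.mpr (h k hk)
      rcases Finset.subset_singleton_iff.mp this with h' | h'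
      · exact hJ0.ne_empty h'
      · exact hJi h'
    obtain ⟨k, hkJ, hki⟩ := this
    have hz : C (fun m => if m ∈ J then (if m = i then s else 0)
        else Function.update (fun _ => (1:ℝ)) i t m) = 0 := by
      apply hC.zero_boundary
      · intro m
        by_cases hm : m ∈ J
        · by_cases hmi : m = i
          · subst hmi; simp [hm, hs, hs1]
          · simp [hm, hmi]
        · by_cases hmi : m = i
          · subst hmi; simp [hm, ht0, ht]
          · simp [hm, Function.update_of_ne hmi]
      · exact ⟨k, by simp [hkJ, hki]⟩
    rw [hz, mul_zero]
  rw [← Finset.sum_subset (Finset.subset_univ ({∅, {i}} : Finset (Finset (Fin d)))) hvan]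
  have hne : (∅ : Finset (Fin d)) ≠ {i} := by
    intro h
    exact absurd (h ▸ Finset.mem_singleton_self i) (Finset.notMem_empty i)
  rw [Finset.sum_pair hne]
  have e0 : (fun k => if k ∈ (∅ : Finset (Fin d)) then (if k = i then s else 0)
      else Function.update (fun _ => (1:ℝ)) i t k) = Function.update (fun _ => (1:ℝ)) i t := by
    funext k; simp
  have e1 : (fun k => if k ∈ ({i} : Finset (Fin d)) then (if k = i then s else 0)
      else Function.update (fun _ => (1:ℝ)) i t k) = Function.update (fun _ => (1:ℝ)) i s := by
    funext k
    by_cases hk : k = i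
    · subst hk; simp
    · simp [hk, Function.update_of_ne hk]
  have c0 : C (Function.update (fun _ => (1:ℝ)) i t) = t := by
    have := hC.one_boundary (Function.update (fun _ => (1:ℝ)) i t)
      (one_cube.update ht0 ht) i (fun j hj => Function.update_of_ne hj _ _)
    simpa using this
  have c1 : C (Function.update (fun _ => (1:ℝ)) i s) = s := by
    have := hC.one_boundary (Function.update (fun _ => (1:ℝ)) i s)
      (one_cube.update hs hs1) i (fun j hj => Function.update_of_ne hj _ _)
    simpa using this
  rw [e0, e1, c0, c1]
  simp
  ring
lemma survival_eq_box {d : ℕ} (C : (Fin d → ℝ) → ℝ) (u : Fin d → ℝ) :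
    survivalF C u = boxVolume C u (fun _ => 1) := rfl

lemma survival_coord_bounds {d : ℕ} {C : (Fin d → ℝ) → ℝ} (hC : IsCopula (Fin d) C)
    {u : Fin d → ℝ} (hu : InCube u) (i : Fin d) {s t : ℝ}
    (hs : 0 ≤ s) (hst : s ≤ t) (ht : t ≤ 1) :
    0 ≤ survivalF C (Function.update u i s) - survivalF C (Function.update u i t) ∧
    survivalF C (Function.update u i s) - survivalF C (Function.update u i t) ≤ t - s := by
  have ht0 : 0 ≤ t := hs.trans hst
  have hs1 : s ≤ 1 := hst.trans ht
  rw [survival_update_eq]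
  have ha : InCube (Function.update u i s) := hu.update hs hs1
  have hb : InCube (Function.update (fun _ => (1:ℝ)) i t) := one_cube.update ht0 ht
  have hab : ∀ k, Function.update u i s k ≤ Function.update (fun _ => (1:ℝ)) i t k := by
    intro k
    by_cases hk : k = i
    · subst hk; simpa using hst
    · simpa [Function.update_of_ne hk] using (hu k).2
  refine ⟨hC.2 _ _ ha hb hab, ?_⟩
  have step := boxVolume_zero_out hC ha hb hab (Finset.univ.erase i)
  have e : (fun k => if k ∈ Finset.univ.erase i then (0:ℝ) else Function.update u i s k)
      = (fun j => if j = i then s else 0) := by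
    funext k
    by_cases hk : k = i
    · subst hk; simp
    · simp [hk, Finset.mem_erase]
  rw [e] at step
  rw [boxVolume_corner hC.1 i s t hs hst ht] at step
  exact step

lemma survival_diff_le {d : ℕ} {C : (Fin d → ℝ) → ℝ} (hC : IsCopula (Fin d) C)
    {u v : Fin d → ℝ} (hu : InCube u) (hv : InCube v) :
    survivalF C v - survivalF C u ≤ ∑ i, max (u i - v i) 0 := by
  set w : ℕ → (Fin d → ℝ) := fun k i => if (i : ℕ) < k then v i else u i with hw
  have hwc : ∀ k, InCube (w k) := by
    intro k m
    by_cases hm : (m : ℕ) < k <;> simp [hw, hm, hu m, hv m]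
  have hw0 : w 0 = u := by funext m; simp [hw]
  have hwd : w d = v := by funext m; simp [hw, m.isLt]
  have tel : survivalF C v - survivalF C u
      = ∑ k ∈ Finset.range d, (survivalF C (w (k+1)) - survivalF C (w k)) := by
    rw [Finset.sum_range_sub (fun k => survivalF C (w k)), hw0, hwd]
  rw [tel]
  have hsum : ∑ i : Fin d, max (u i - v i) 0
      = ∑ k ∈ Finset.range d,
        (if h : k < d then max (u ⟨k, h⟩ - v ⟨k, h⟩) 0 else 0) := by
    rw [← Fin.sum_univ_eq_sum_range (fun k => if h : k < d then max (u ⟨k, h⟩ - v ⟨k, h⟩) 0 else 0) d]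
    exact Finset.sum_congr rfl (fun m _ => by simp [m.isLt])
  rw [hsum]
  apply Finset.sum_le_sum
  intro k hk
  have hkd : k < d := Finset.mem_range.mp hk
  rw [dif_pos hkd]
  set i : Fin d := ⟨k, hkd⟩ with hidef
  have hik : (i : ℕ) = k := rfl
  have e1 : w (k+1) = Function.update (w k) i (v i) := by
    funext m
    by_cases hm : m = i
    · subst hm; simp [hw, hik]
    · have hmk : (m : ℕ) ≠ k := fun h => hm (Fin.ext (h.trans hik.symm))
      have h2 : ((m : ℕ) < k + 1) = ((m : ℕ) < k) := by
        apply propext; omega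
      simp [hw, Function.update_of_ne hm, h2]
  have e2 : w k = Function.update (w k) i (u i) := by
    have hki : w k i = u i := by simp [hw, hik]
    rw [← hki, Function.update_eq_self]
  rcases le_total (v i) (u i) with h | h
  · have := (survival_coord_bounds hC (hwc k) i (hv i).1 h (hu i).2).2
    rw [e1]
    nth_rewrite 2 [e2]
    rw [max_eq_left (by linarith)]
    exact this
  · have := (survival_coord_bounds hC (hwc k) i (hu i).1 h (hv i).2).1
    rw [e1]
    nth_rewrite 2 [e2]
    have hm : max (u i - v i) 0 = 0 := max_eq_right (by linarith)
    rw [hm]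
    linarith

lemma survival_anti {d : ℕ} {C : (Fin d → ℝ) → ℝ} (hC : IsCopula (Fin d) C)
    {u v : Fin d → ℝ} (hu : InCube u) (hv : InCube v) (huv : ∀ i, u i ≤ v i) :
    survivalF C v ≤ survivalF C u := by
  have h := survival_diff_le hC hu hv
  have hz : ∑ i : Fin d, max (u i - v i) 0 = 0 :=
    Finset.sum_eq_zero (fun i _ => max_eq_right (by linarith [huv i]))
  linarith
lemma survival_nonneg {d : ℕ} {C : (Fin d → ℝ) → ℝ} (hC : IsCopula (Fin d) C)
    {u : Fin d → ℝ} (hu : InCube u) : 0 ≤ survivalF C u := by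
  rw [survival_eq_box]
  exact hC.2 u (fun _ => 1) hu one_cube (fun k => (hu k).2)

lemma survival_zero {d : ℕ} (hd : 0 < d) {C : (Fin d → ℝ) → ℝ}
    (hC : IsQuasiCopula (Fin d) C) :
    survivalF C (fun _ => 0) = 1 := by
  set i : Fin d := ⟨0, hd⟩
  have e : (fun _ : Fin d => (0:ℝ)) = (fun j => if j = i then 0 else 0) := by
    funext k; simp
  have e2 : (fun _ : Fin d => (1:ℝ)) = Function.update (fun _ => (1:ℝ)) i 1 := by
    funext k
    by_cases hk : k = i
    · subst hk; simp
    · simp [Function.update_of_ne hk]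
  rw [survival_eq_box, e, e2, boxVolume_corner hC i 0 1 le_rfl zero_le_one le_rfl]
  norm_num

lemma survival_le_one_sub {d : ℕ} {C : (Fin d → ℝ) → ℝ} (hC : IsCopula (Fin d) C)
    {u : Fin d → ℝ} (hu : InCube u) (i : Fin d) :
    survivalF C u ≤ 1 - u i := by
  set w : Fin d → ℝ := fun j => if j = i then u i else 0 with hwdef
  have hwc : InCube w := by
    intro k
    by_cases hk : k = i <;> simp [hwdef, hk, hu i]
  have hle : ∀ k, w k ≤ u k := by
    intro k
    by_cases hk : k = i
    · subst hk; simp [hwdef]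
    · simp [hwdef, hk, (hu k).1]
  have h1 : survivalF C u ≤ survivalF C w := survival_anti hC hwc hu hle
  have e2 : (fun _ : Fin d => (1:ℝ)) = Function.update (fun _ => (1:ℝ)) i 1 := by
    funext k
    by_cases hk : k = i
    · subst hk; simp
    · simp [Function.update_of_ne hk]
  have h2 : survivalF C w = 1 - u i := by
    rw [survival_eq_box, e2, hwdef, boxVolume_corner hC.1 i (u i) 1 (hu i).1 (hu i).2 le_rfl]
  linarith
/-- improved Fréchet–Hoeffding bounds for survival copulas under a
prescription of the survival function on a compact set `S`. -/
theorem stmt16 (d : ℕ) (hd : 2 ≤ d) (S : Set (Fin d → ℝ)) (hne : S.Nonempty)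
    (hcomp : IsCompact S) (hsub : ∀ x ∈ S, InCube x)
    (Qhat : (Fin d → ℝ) → ℝ)
    (hQhat : IsQuasiCopula (Fin d) (fun v => Qhat (fun i => 1 - v i)))
    (C : (Fin d → ℝ) → ℝ) (hC : IsCopula (Fin d) C)
    (hagree : ∀ x ∈ S, survivalF C x = Qhat x) :
    (∀ u : Fin d → ℝ, InCube u →
      QLowS ((fun x : Fin d → ℝ => fun i => 1 - x i) '' S)
          (fun v => Qhat (fun i => 1 - v i)) (fun i => 1 - u i) ≤ survivalF C u ∧
      survivalF C u ≤
        QUpS ((fun x : Fin d → ℝ => fun i => 1 - x i) '' S)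
          (fun v => Qhat (fun i => 1 - v i)) (fun i => 1 - u i)) ∧
    (∀ u ∈ S,
      QLowS ((fun x : Fin d → ℝ => fun i => 1 - x i) '' S)
          (fun v => Qhat (fun i => 1 - v i)) (fun i => 1 - u i) = survivalF C u ∧
      QUpS ((fun x : Fin d → ℝ => fun i => 1 - x i) '' S)
          (fun v => Qhat (fun i => 1 - v i)) (fun i => 1 - u i) = survivalF C u) := by
  have hNE : Nonempty (Fin d) := ⟨⟨0, by omega⟩⟩
  have hzero : InCube (fun _ : Fin d => (0:ℝ)) := fun _ => ⟨le_rfl, zero_le_one⟩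
  -- key inequalities
  have keyL : ∀ u : Fin d → ℝ, InCube u → ∀ x ∈ S,
      Qhat x - ∑ i, max (u i - x i) 0 ≤ survivalF C u := by
    intro u hu x hx
    rw [← hagree x hx]
    have := survival_diff_le hC hu (hsub x hx)
    linarith
  have keyU : ∀ u : Fin d → ℝ, InCube u → ∀ x ∈ S,
      survivalF C u ≤ Qhat x + ∑ i, max (x i - u i) 0 := by
    intro u hu x hx
    rw [← hagree x hx]
    have := survival_diff_le hC (hsub x hx) hu
    linarith
  -- image rewriting
  have himgL : ∀ u : Fin d → ℝ,
      ((fun x => (fun v => Qhat (fun i => 1 - v i)) x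
          - ∑ i, max (x i - (fun i => 1 - u i) i) 0) ''
        ((fun x : Fin d → ℝ => fun i => 1 - x i) '' S))
      = ((fun x => Qhat x - ∑ i, max (u i - x i) 0) '' S) := by
    intro u
    rw [Set.image_image]
    apply Set.image_congr'
    intro x
    simp only []
    have e1 : (fun i => 1 - (1 - x i)) = x := funext fun i => by ring
    rw [e1]
    congr 1
    apply Finset.sum_congr rfl
    intro i _
    congr 1
    ring
  have himgU : ∀ u : Fin d → ℝ,
      ((fun x => (fun v => Qhat (fun i => 1 - v i)) x
          + ∑ i, max ((fun i => 1 - u i) i - x i) 0) ''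
        ((fun x : Fin d → ℝ => fun i => 1 - x i) '' S))
      = ((fun x => Qhat x + ∑ i, max (x i - u i) 0) '' S) := by
    intro u
    rw [Set.image_image]
    apply Set.image_congr'
    intro x
    simp only []
    have e1 : (fun i => 1 - (1 - x i)) = x := funext fun i => by ring
    rw [e1]
    congr 1
    apply Finset.sum_congr rfl
    intro i _
    congr 1
    ring
  have main : ∀ u : Fin d → ℝ, InCube u →
      QLowS ((fun x : Fin d → ℝ => fun i => 1 - x i) '' S)
          (fun v => Qhat (fun i => 1 - v i)) (fun i => 1 - u i) ≤ survivalF C u ∧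
      survivalF C u ≤
        QUpS ((fun x : Fin d → ℝ => fun i => 1 - x i) '' S)
          (fun v => Qhat (fun i => 1 - v i)) (fun i => 1 - u i) := by
    intro u hu
    constructor
    · unfold QLowS
      apply max_le
      · unfold Wd
        apply max_le (survival_nonneg hC hu)
        have hsum : ∑ i : Fin d, (1 - u i) = (d:ℝ) - ∑ i, u i := by
          rw [Finset.sum_sub_distrib]
          simp
        have h0 := survival_diff_le hC hu hzero
        rw [survival_zero (by omega) hC.1] at h0
        have hsum2 : ∑ i : Fin d, max ((u i) - 0) 0 = ∑ i, u i := by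
          apply Finset.sum_congr rfl
          intro i _
          rw [sub_zero]
          exact max_eq_left (hu i).1
        rw [hsum2] at h0
        simp only [Fintype.card_fin]
        rw [hsum]
        linarith
      · rw [himgL u]
        apply csSup_le (hne.image _)
        rintro z ⟨x, hx, rfl⟩
        exact keyL u hu x hx
    · unfold QUpS
      apply le_min
      · unfold Md
        apply le_csInf (Set.range_nonempty _)
        rintro z ⟨i, rfl⟩
        exact survival_le_one_sub hC hu i
      · rw [himgU u]
        apply le_csInf (hne.image _)
        rintro z ⟨x, hx, rfl⟩
        exact keyU u hu x hx
  refine ⟨main, ?_⟩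
  intro u huS
  have hu := hsub u huS
  obtain ⟨hL, hU⟩ := main u hu
  constructor
  · apply le_antisymm hL
    have hmem : survivalF C u ∈ ((fun x => Qhat x - ∑ i, max (u i - x i) 0) '' S) := by
      refine ⟨u, huS, ?_⟩
      rw [hagree u huS]
      simp
    have hbdd : BddAbove ((fun x => Qhat x - ∑ i, max (u i - x i) 0) '' S) := by
      refine ⟨survivalF C u, ?_⟩
      rintro z ⟨x, hx, rfl⟩
      exact keyL u hu x hx
    have : survivalF C u ≤ sSup ((fun x => Qhat x - ∑ i, max (u i - x i) 0) '' S) :=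
      le_csSup hbdd hmem
    unfold QLowS
    rw [himgL u]
    exact le_trans this (le_max_right _ _)
  · apply le_antisymm ?_ hU
    have hmem : survivalF C u ∈ ((fun x => Qhat x + ∑ i, max (x i - u i) 0) '' S) := by
      refine ⟨u, huS, ?_⟩
      rw [hagree u huS]
      simp
    have hbdd : BddBelow ((fun x => Qhat x + ∑ i, max (x i - u i) 0) '' S) := by
      refine ⟨0, ?_⟩
      rintro z ⟨x, hx, rfl⟩
      have h1 : 0 ≤ Qhat x := by
        rw [← hagree x hx]
        exact survival_nonneg hC (hsub x hx)
      have h2 : (0:ℝ) ≤ ∑ i, max (x i - u i) 0 :=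
        Finset.sum_nonneg (fun i _ => le_max_right _ _)
      dsimp only
      linarith
    have : sInf ((fun x => Qhat x + ∑ i, max (x i - u i) 0) '' S) ≤ survivalF C u :=
      csInf_le hbdd hmem
    unfold QUpS
    rw [himgU u]
    exact le_trans (min_le_right _ _) this
end
end
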